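/- arXiv:2112.11123 — 12 statements merged into one kernel-verified Lean document; each statement's English description precedes it below -/
import Mathlib

section
/- A bipartite matrix X in M_d(C) ⊗ M_d(C) satisfying (O⊗O)X(O⊗O) = X for all diagonal orthogonal (sign) matrices O can be written as X = Σ_{i,j} A_{ij} |ij⟩⟨ij| + Σ_{i≠j} B_{ij} |ii⟩⟨jj| + Σ_{i≠j} C_{ij} |ij⟩⟨ji| for complex matrices A, B, C with diag(A) = diag(B) = diag(C). Consequently, the complex dimension of the subspace of such matrices is 3d² − 2d. -/
/-!
Conjugation by `diag(s_i s_j)` multiplies the entry `X_{ij,kl}` by `s_i s_j s_k s_l`. This is `1`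
for every sign vector `s` exactly when `i, j, k, l` split into two pairs of equal indices;
otherwise some index occurs exactly once, flipping its sign negates the entry, and invariance
forces the entry to vanish. So the invariant matrices are exactly those supported on the paired
positions, which are the positions of `X3 A B C`. For a fixed row `(i, j)` the paired columns are
the `d` pairs `(k, k)` if `i = j`, and `(i, j), (j, i)` otherwise, giving `d² + 2(d² - d)`.
-/

open Matrix

/-- The LDOI matrix `X^{(3)}_{(A,B,C)} = Σ_{i,j} A_{ij}|ij⟩⟨ij| + Σ_{i≠j} B_{ij}|ii⟩⟨jj|
  + Σ_{i≠j} C_{ij}|ij⟩⟨ji|`. -/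
def X3 {d : ℕ} {R : Type*} [CommRing R] (A B C : Matrix (Fin d) (Fin d) R) :
    Matrix (Fin d × Fin d) (Fin d × Fin d) R :=
  Matrix.of fun p q =>
    (if p.1 = q.1 ∧ p.2 = q.2 then A p.1 p.2 else 0) +
    (if p.1 = p.2 ∧ q.1 = q.2 ∧ p.1 ≠ q.1 then B p.1 q.1 else 0) +
    (if p.1 = q.2 ∧ p.2 = q.1 ∧ p.1 ≠ p.2 then C p.1 p.2 else 0)

/-- The realignment `(X^R)_{ij,kl} = X_{ik,jl}`. -/
def realign {d : ℕ} {R : Type*} [CommRing R]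
    (X : Matrix (Fin d × Fin d) (Fin d × Fin d) R) :
    Matrix (Fin d × Fin d) (Fin d × Fin d) R :=
  Matrix.of fun p q => X (p.1, q.1) (p.2, q.2)

/-- The partial transpose `(X^Γ)_{ij,kl} = X_{il,kj}`. -/
def ptrans {d : ℕ} {R : Type*} [CommRing R]
    (X : Matrix (Fin d × Fin d) (Fin d × Fin d) R) :
    Matrix (Fin d × Fin d) (Fin d × Fin d) R :=
  Matrix.of fun p q => X (p.1, q.2) (q.1, p.2)

/-- The triple (A,B,C) has equal diagonals. -/
def EqDiag {d : ℕ} {R : Type*} [CommRing R] (A B C : Matrix (Fin d) (Fin d) R) : Prop :=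
  ∀ i, A i i = B i i ∧ B i i = C i i

namespace Matrix

variable {m n : Type*}

def supportedOn (R : Type*) [Semiring R] (S : Set (m × n)) : Submodule R (Matrix m n R) where
  carrier := {X | ∀ i j, (i, j) ∉ S → X i j = 0}
  add_mem' hX hY i j h := by simp [hX i j h, hY i j h]
  zero_mem' _ _ _ := rfl
  smul_mem' c X hX i j h := by simp [hX i j h]

def supportedOnEquivFun {R : Type*} [Semiring R] (S : Set (m × n)) [DecidablePred (· ∈ S)] :
    supportedOn R S ≃ₗ[R] (S → R) where
  toFun X x := X.1 x.1.1 x.1.2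
  invFun f := ⟨of fun i j => if h : (i, j) ∈ S then f ⟨(i, j), h⟩ else 0,
    fun i j h => by simp [h]⟩
  map_add' _ _ := rfl
  map_smul' _ _ := rfl
  left_inv X := by
    ext i j
    by_cases h : (i, j) ∈ S
    · simp [h]
    · simp [h, X.2 i j h]
  right_inv f := by
    ext x
    simp

theorem finrank_supportedOn {K : Type*} [Field K] [Finite m] [Finite n] (S : Set (m × n)) :
    Module.finrank K (supportedOn K S) = Nat.card S := by
  classical
  have := Fintype.ofFinite m
  have := Fintype.ofFinite n
  rw [(supportedOnEquivFun S).finrank_eq, Module.finrank_fintype_fun_eq_card,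
    Nat.card_eq_fintype_card]

end Matrix

namespace LDOI

variable {ι : Type*}

def Paired (p q : ι × ι) : Prop :=
  p = q ∨ (p.1 = p.2 ∧ q.1 = q.2) ∨ p = q.swap

theorem paired_mk_iff {i j k l : ι} :
    Paired (i, j) (k, l) ↔ (i = k ∧ j = l) ∨ (i = j ∧ k = l) ∨ (i = l ∧ j = k) := by
  simp [Paired]

instance [DecidableEq ι] : DecidableRel (Paired (ι := ι)) := fun _ _ => by
  unfold Paired; infer_instance

def IsSignInvariant [Fintype ι] [DecidableEq ι] {R : Type*} [CommRing R]
    (X : Matrix (ι × ι) (ι × ι) R) : Prop :=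
  ∀ s : ι → R, (∀ i, s i = 1 ∨ s i = -1) →
    diagonal (fun p : ι × ι => s p.1 * s p.2) * X * diagonal (fun p : ι × ι => s p.1 * s p.2) = X

variable {R : Type*} [CommRing R]

theorem sign_mul_of_paired {s : ι → R} (hs : ∀ i, s i = 1 ∨ s i = -1) {p q : ι × ι}
    (h : Paired p q) : s p.1 * s p.2 * (s q.1 * s q.2) = 1 := by
  have hsq : ∀ x, s x * s x = 1 := fun x => by rcases hs x with h | h <;> simp [h]
  obtain ⟨i, j⟩ := p
  obtain ⟨k, l⟩ := q
  rcases paired_mk_iff.mp h with ⟨rfl, rfl⟩ | ⟨rfl, rfl⟩ | ⟨rfl, rfl⟩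
  · linear_combination (s j * s j) * hsq i + hsq j
  · linear_combination (s k * s k) * hsq i + hsq k
  · linear_combination (s j * s j) * hsq i + hsq j

/-- If `i, j, k, l` do not split into two pairs of equal indices, one of them occurs exactly once;
flip the sign there. -/
theorem exists_sign_mul_eq_neg_one [DecidableEq ι] {p q : ι × ι} (h : ¬ Paired p q) :
    ∃ s : ι → R, (∀ i, s i = 1 ∨ s i = -1) ∧ s p.1 * s p.2 * (s q.1 * s q.2) = -1 := by
  obtain ⟨i, j⟩ := p
  obtain ⟨k, l⟩ := q
  have hocc : ∃ a, (i = a ∧ j ≠ a ∧ k ≠ a ∧ l ≠ a) ∨ (i ≠ a ∧ j = a ∧ k ≠ a ∧ l ≠ a) ∨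
      (i ≠ a ∧ j ≠ a ∧ k = a ∧ l ≠ a) ∨ (i ≠ a ∧ j ≠ a ∧ k ≠ a ∧ l = a) := by
    rw [paired_mk_iff] at h
    by_contra! hc
    have := hc i; have := hc j; have := hc k
    grind
  obtain ⟨a, ha⟩ := hocc
  refine ⟨fun x => if x = a then -1 else 1, fun x => by by_cases h : x = a <;> simp [h], ?_⟩
  rcases ha with ⟨h₁, h₂, h₃, h₄⟩ | ⟨h₁, h₂, h₃, h₄⟩ | ⟨h₁, h₂, h₃, h₄⟩ | ⟨h₁, h₂, h₃, h₄⟩ <;>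
    simp [h₁, h₂, h₃, h₄]

variable [Fintype ι] [DecidableEq ι]

theorem diagonal_mul_mul_diagonal_apply (X : Matrix (ι × ι) (ι × ι) R) (s : ι → R)
    (p q : ι × ι) :
    (diagonal (fun p : ι × ι => s p.1 * s p.2) * X *
      diagonal (fun p : ι × ι => s p.1 * s p.2)) p q = s p.1 * s p.2 * (s q.1 * s q.2) * X p q := by
  rw [mul_diagonal, diagonal_mul]
  ring

theorem isSignInvariant_iff [NoZeroDivisors R] [NeZero (2 : R)] {X : Matrix (ι × ι) (ι × ι) R} :
    IsSignInvariant X ↔ X ∈ supportedOn R {x | Paired x.1 x.2} := by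
  constructor
  · intro hX p q hpq
    obtain ⟨s, hs, hneg⟩ := exists_sign_mul_eq_neg_one (R := R) hpq
    have h := congrFun₂ (hX s hs) p q
    rw [diagonal_mul_mul_diagonal_apply, hneg] at h
    have h2 : (2 : R) * X p q = 0 := by linear_combination -h
    exact (mul_eq_zero.mp h2).resolve_left two_ne_zero
  · intro hX s hs
    ext p q
    by_cases hpq : Paired p q
    · rw [diagonal_mul_mul_diagonal_apply, sign_mul_of_paired hs hpq, one_mul]
    · rw [diagonal_mul_mul_diagonal_apply, hX p q hpq, mul_zero]

theorem setOf_isSignInvariant [NoZeroDivisors R] [NeZero (2 : R)] :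
    {X : Matrix (ι × ι) (ι × ι) R | IsSignInvariant X} =
      (supportedOn R {x : (ι × ι) × (ι × ι) | Paired x.1 x.2} : Set _) :=
  Set.ext fun _ => isSignInvariant_iff

theorem exists_eqDiag_eq_X3 {d : ℕ} {X : Matrix (Fin d × Fin d) (Fin d × Fin d) R}
    (hX : X ∈ supportedOn R {x | Paired x.1 x.2}) :
    ∃ A B C : Matrix (Fin d) (Fin d) R, EqDiag A B C ∧ X = X3 A B C := by
  refine ⟨of fun i j => X (i, j) (i, j), of fun i k => X (i, i) (k, k),
    of fun i j => X (i, j) (j, i), fun i => ⟨rfl, rfl⟩, ?_⟩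
  ext ⟨i, j⟩ ⟨k, l⟩
  have hzero : ¬ Paired (i, j) (k, l) → X (i, j) (k, l) = 0 := hX (i, j) (k, l)
  rw [paired_mk_iff] at hzero
  simp only [X3, of_apply]
  split_ifs <;> grind

theorem card_filter_paired (p : ι × ι) :
    (Finset.univ.filter (Paired p)).card = if p.1 = p.2 then Fintype.card ι else 2 := by
  obtain ⟨i, j⟩ := p
  split_ifs with hij
  · dsimp only at hij
    subst hij
    have : Finset.univ.filter (Paired (i, i)) = (Finset.univ : Finset ι).diag := by
      ext ⟨k, l⟩
      simp only [Finset.mem_filter, Finset.mem_univ, true_and, Finset.mem_diag, paired_mk_iff]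
      grind
    rw [this, Finset.diag_card, Finset.card_univ]
  · have : Finset.univ.filter (Paired (i, j)) = {(i, j), (j, i)} := by
      ext ⟨k, l⟩
      simp only [Finset.mem_filter, Finset.mem_univ, true_and, paired_mk_iff,
        Finset.mem_insert, Finset.mem_singleton, Prod.mk.injEq]
      grind
    rw [this, Finset.card_pair fun h => hij (Prod.ext_iff.mp h).1]

theorem card_paired :
    Nat.card {x : (ι × ι) × (ι × ι) | Paired x.1 x.2} =
      3 * Fintype.card ι ^ 2 - 2 * Fintype.card ι := by
  set d := Fintype.card ι
  have hdiag : (Finset.univ.filter fun p : ι × ι => p.1 = p.2).card = d := by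
    rw [← Finset.univ_product_univ, ← Finset.diag_eq_filter, Finset.diag_card, Finset.card_univ]
  have hoff : (Finset.univ.filter fun p : ι × ι => ¬ p.1 = p.2).card = d * d - d := by
    rw [Finset.filter_not, Finset.card_sdiff_of_subset (Finset.filter_subset _ _), hdiag,
      Finset.card_univ, Fintype.card_prod]
  calc Nat.card {x : (ι × ι) × (ι × ι) | Paired x.1 x.2}
      = ∑ p : ι × ι, (Finset.univ.filter (Paired p)).card := by
        rw [Nat.card_eq_fintype_card, Fintype.card_subtype, Finset.card_filter,
          Fintype.sum_prod_type]
        simp only [Finset.card_filter, Set.mem_ofPred_eq]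
    _ = d * d + 2 * (d * d - d) := by
        simp only [card_filter_paired, Finset.sum_ite, Finset.sum_const, hdiag, hoff, smul_eq_mul]
        ring
    _ = 3 * d ^ 2 - 2 * d := by
        have := Nat.le_mul_self d
        rw [sq]
        omega

end LDOI

/-- every matrix invariant under conjugation by all diagonal sign matrices
`O ⊗ O` is of LDOI form, and the subspace of such matrices has dimension `3d² - 2d`. -/
theorem stmt_0 (d : ℕ) :
    (∀ X : Matrix (Fin d × Fin d) (Fin d × Fin d) ℂ,
      (∀ s : Fin d → ℂ, (∀ i, s i = 1 ∨ s i = -1) →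
        Matrix.diagonal (fun p : Fin d × Fin d => s p.1 * s p.2) * X *
          Matrix.diagonal (fun p : Fin d × Fin d => s p.1 * s p.2) = X) →
      ∃ A B C : Matrix (Fin d) (Fin d) ℂ, EqDiag A B C ∧ X = X3 A B C) ∧
    Module.finrank ℂ (Submodule.span ℂ
      {X : Matrix (Fin d × Fin d) (Fin d × Fin d) ℂ |
        ∀ s : Fin d → ℂ, (∀ i, s i = 1 ∨ s i = -1) →
          Matrix.diagonal (fun p : Fin d × Fin d => s p.1 * s p.2) * X *
            Matrix.diagonal (fun p : Fin d × Fin d => s p.1 * s p.2) = X})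
      = 3 * d ^ 2 - 2 * d := by
  refine ⟨fun X hX => LDOI.exists_eqDiag_eq_X3 (LDOI.isSignInvariant_iff.mp hX), ?_⟩
  change Module.finrank ℂ (Submodule.span ℂ {X | LDOI.IsSignInvariant X}) = _
  rw [LDOI.setOf_isSignInvariant, Submodule.span_eq, finrank_supportedOn, LDOI.card_paired,
    Fintype.card_fin]
end

section
/- Every LDOI matrix X parametrized by (A,B,C) is unitarily similar (via a permutation of the product basis) to the direct sum B ⊕ (⊕_{i<j} [[A_{ij}, C_{ij}],[C_{ji}, A_{ji}]]). In particular, the spectrum of X equals the union of the spectrum of B with the spectra of the 2×2 blocks [[A_{ij}, C_{ij}],[C_{ji}, A_{ji}]] over i<j, and rank(X) = rank(B) + Σ_{i<j} rank([[A_{ij}, C_{ij}],[C_{ji}, A_{ji}]]). -/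
open Matrix Module

section AuxRank

variable {m n : Type*} [Fintype m] [Fintype n] [DecidableEq m] [DecidableEq n]

lemma range_prodMap' {R M M₂ M₃ M₄ : Type*} [CommRing R] [AddCommGroup M] [AddCommGroup M₂]
    [AddCommGroup M₃] [AddCommGroup M₄] [Module R M] [Module R M₂] [Module R M₃] [Module R M₄]
    (f : M →ₗ[R] M₃) (g : M₂ →ₗ[R] M₄) :
    LinearMap.range (f.prodMap g) = (LinearMap.range f).prod (LinearMap.range g) := by
  ext x
  constructor
  · rintro ⟨⟨a, b⟩, rfl⟩
    exact ⟨⟨a, rfl⟩, ⟨b, rfl⟩⟩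
  · rintro ⟨⟨a, ha⟩, ⟨b, hb⟩⟩
    exact ⟨(a, b), Prod.ext ha hb⟩

noncomputable def prodSubEquiv {R M N : Type*} [CommRing R] [AddCommGroup M] [AddCommGroup N]
    [Module R M] [Module R N] (p : Submodule R M) (q : Submodule R N) :
    (p.prod q) ≃ₗ[R] p × q where
  toFun x := (⟨x.1.1, x.2.1⟩, ⟨x.1.2, x.2.2⟩)
  invFun y := ⟨(y.1.1, y.2.1), ⟨y.1.2, y.2.2⟩⟩
  map_add' _ _ := rfl
  map_smul' _ _ := rfl
  left_inv _ := rfl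
  right_inv _ := rfl

lemma rank_fromBlocks_zero (M : Matrix m m ℂ) (N : Matrix n n ℂ) :
    (fromBlocks M 0 0 N).rank = M.rank + N.rank := by
  classical
  set e := LinearEquiv.sumArrowLequivProdArrow m n ℂ ℂ
  have key : (fromBlocks M 0 0 N).mulVecLin
      = (e.symm.toLinearMap ∘ₗ (M.mulVecLin.prodMap N.mulVecLin)) ∘ₗ e.toLinearMap := by
    apply LinearMap.ext; intro x
    simp only [LinearMap.comp_apply, mulVecLin_apply, LinearEquiv.coe_coe]
    funext i
    cases i with
    | inl i =>
      simp [e, fromBlocks_mulVec, LinearEquiv.sumArrowLequivProdArrow,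
        Equiv.sumArrowEquivProdArrow]
    | inr i =>
      simp [e, fromBlocks_mulVec, LinearEquiv.sumArrowLequivProdArrow,
        Equiv.sumArrowEquivProdArrow]
  rw [Matrix.rank, key,
    LinearMap.range_comp_of_range_eq_top _ (LinearMap.range_eq_top.mpr e.surjective),
    LinearMap.range_comp, LinearEquiv.finrank_map_eq, range_prodMap']
  rw [(prodSubEquiv _ _).finrank_eq, Module.finrank_prod]
  rfl

noncomputable def piSubEquiv {R : Type*} {ι : Type*} [Fintype ι] [CommRing R]
    {M : ι → Type*} [∀ i, AddCommGroup (M i)] [∀ i, Module R (M i)]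
    (p : ∀ i, Submodule R (M i)) :
    (Submodule.pi Set.univ p) ≃ₗ[R] ∀ i, p i where
  toFun x i := ⟨x.1 i, x.2 i (Set.mem_univ i)⟩
  invFun y := ⟨fun i => y i, fun i _ => (y i).2⟩
  map_add' _ _ := rfl
  map_smul' _ _ := rfl
  left_inv _ := rfl
  right_inv _ := rfl

lemma range_pi' {R : Type*} {ι : Type*} [Fintype ι] [CommRing R]
    {M N : ι → Type*} [∀ i, AddCommGroup (M i)] [∀ i, Module R (M i)]
    [∀ i, AddCommGroup (N i)] [∀ i, Module R (N i)]
    (f : ∀ i, M i →ₗ[R] N i) :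
    LinearMap.range (LinearMap.pi fun i => (f i).comp (LinearMap.proj i))
      = Submodule.pi Set.univ (fun i => LinearMap.range (f i)) := by
  ext x
  constructor
  · rintro ⟨v, rfl⟩ i _
    exact ⟨v i, rfl⟩
  · intro hx
    refine ⟨fun i => (hx i (Set.mem_univ i)).choose, ?_⟩
    funext i
    exact (hx i (Set.mem_univ i)).choose_spec

lemma rank_blockDiagonal' {ι m : Type*} [Fintype ι] [DecidableEq ι] [Fintype m] [DecidableEq m]
    (M : ι → Matrix m m ℂ) :
    (blockDiagonal M).rank = ∑ i, (M i).rank := by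
  classical
  set E : (m × ι → ℂ) ≃ₗ[ℂ] (ι → m → ℂ) :=
    (LinearEquiv.funCongrLeft ℂ ℂ (Equiv.prodComm ι m)).trans (LinearEquiv.curry ℂ ℂ ι m)
  have hE : ∀ (v : m × ι → ℂ) (i : ι) (j : m), E v i j = v (j, i) := fun _ _ _ => rfl
  have hEs : ∀ (w : ι → m → ℂ) (j : m) (i : ι), E.symm w (j, i) = w i j := fun _ _ _ => rfl
  set P : (ι → m → ℂ) →ₗ[ℂ] (ι → m → ℂ) :=
    LinearMap.pi fun i => (M i).mulVecLin.comp (LinearMap.proj i)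
  have key : (blockDiagonal M).mulVecLin = (E.symm.toLinearMap ∘ₗ P) ∘ₗ E.toLinearMap := by
    apply LinearMap.ext; intro v
    funext jk
    obtain ⟨j, k⟩ := jk
    simp only [LinearMap.comp_apply, mulVecLin_apply, LinearEquiv.coe_coe]
    rw [hEs]
    simp only [P, LinearMap.pi_apply, LinearMap.comp_apply, LinearMap.proj_apply,
      mulVecLin_apply]
    simp only [mulVec, dotProduct, blockDiagonal_apply, Fintype.sum_prod_type]
    rw [Finset.sum_comm]
    rw [Finset.sum_eq_single k]
    · simp [hE]
    · intro b _ hb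
      simp [Ne.symm hb]
    · simp
  rw [Matrix.rank, key,
    LinearMap.range_comp_of_range_eq_top _ (LinearMap.range_eq_top.mpr E.surjective),
    LinearMap.range_comp, LinearEquiv.finrank_map_eq, range_pi',
    (piSubEquiv _).finrank_eq, Module.finrank_pi_fintype]
  rfl

lemma mem_spectrum_iff_det (M : Matrix n n ℂ) (z : ℂ) :
    z ∈ spectrum ℂ M ↔ (z • (1 : Matrix n n ℂ) - M).det = 0 := by
  rw [spectrum.mem_iff, Algebra.algebraMap_eq_smul_one, Matrix.isUnit_iff_isUnit_det,
    isUnit_iff_ne_zero, not_not]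

lemma spectrum_fromBlocks_zero (M : Matrix m m ℂ) (N : Matrix n n ℂ) :
    spectrum ℂ (fromBlocks M 0 0 N) = spectrum ℂ M ∪ spectrum ℂ N := by
  ext z
  simp only [Set.mem_union, mem_spectrum_iff_det]
  have : z • (1 : Matrix (m ⊕ n) (m ⊕ n) ℂ) - fromBlocks M 0 0 N
      = fromBlocks (z • 1 - M) 0 0 (z • 1 - N) := by
    rw [sub_eq_add_neg, ← fromBlocks_one, fromBlocks_smul, fromBlocks_neg, fromBlocks_add]
    simp [sub_eq_add_neg]
  rw [this, det_fromBlocks_zero₂₁, mul_eq_zero]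

lemma spectrum_blockDiagonal {ι m : Type*} [Fintype ι] [DecidableEq ι] [Fintype m] [DecidableEq m]
    (M : ι → Matrix m m ℂ) :
    spectrum ℂ (blockDiagonal M) = ⋃ i, spectrum ℂ (M i) := by
  ext z
  simp only [Set.mem_iUnion, mem_spectrum_iff_det]
  have : z • (1 : Matrix (m × ι) (m × ι) ℂ) - blockDiagonal M
      = blockDiagonal (fun i => z • 1 - M i) := by
    rw [show (fun i => z • (1 : Matrix m m ℂ) - M i) = z • (1 : ι → Matrix m m ℂ) - M from rfl,
      blockDiagonal_sub, blockDiagonal_smul, blockDiagonal_one]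
  rw [this, det_blockDiagonal, Finset.prod_eq_zero_iff]
  simp

end AuxRank

/-- The permutation of the product basis sending the diagonal to the first block and the
pair `{(i,j),(j,i)}` (with `i < j`) to a `2 × 2` block. -/
def pairEquiv (d : ℕ) : (Fin d ⊕ (Fin 2 × {p : Fin d × Fin d // p.1 < p.2})) ≃ (Fin d × Fin d) where
  toFun x := match x with
    | .inl i => (i, i)
    | .inr (k, ⟨(a, b), _⟩) => if k = 0 then (a, b) else (b, a)
  invFun q :=
    if h : q.1 = q.2 then .inl q.1
    else if h2 : q.1 < q.2 then .inr (0, ⟨q, h2⟩)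
    else .inr (1, ⟨(q.2, q.1), lt_of_le_of_ne (not_lt.mp h2) (Ne.symm h)⟩)
  left_inv x := by
    rcases x with i | ⟨k, ⟨⟨a, b⟩, hab⟩⟩
    · simp
    · have hab' : a < b := hab
      dsimp only
      by_cases hk : k = 0
      · rw [if_pos hk, dif_neg (by dsimp; omega), dif_pos hab', hk]
      · have hk1 : k = 1 := by omega
        rw [if_neg hk, dif_neg (by dsimp; omega), dif_neg (by dsimp; omega), hk1]
  right_inv q := by
    obtain ⟨a, b⟩ := q
    dsimp only
    by_cases h : a = b
    · rw [dif_pos h]; exact Prod.ext rfl h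
    · by_cases h2 : a < b
      · rw [dif_neg h, dif_pos h2]; simp
      · rw [dif_neg h, dif_neg h2]; simp [if_neg (one_ne_zero)]

@[simp] lemma pairEquiv_inl {d : ℕ} (i : Fin d) : pairEquiv d (Sum.inl i) = (i, i) := rfl

@[simp] lemma pairEquiv_inr {d : ℕ} (k : Fin 2) (p : {p : Fin d × Fin d // p.1 < p.2}) :
    pairEquiv d (Sum.inr (k, p)) = if k = 0 then p.1 else (p.1.2, p.1.1) := by
  obtain ⟨⟨a, b⟩, hp⟩ := p; rfl

theorem submatrix_X3_eq {d : ℕ} (A B C : Matrix (Fin d) (Fin d) ℂ) (h : EqDiag A B C) :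
    (X3 A B C).submatrix (pairEquiv d) (pairEquiv d) =
      Matrix.fromBlocks B 0 0
        (Matrix.blockDiagonal fun p : {p : Fin d × Fin d // p.1 < p.2} =>
          !![A p.1.1 p.1.2, C p.1.1 p.1.2; C p.1.2 p.1.1, A p.1.2 p.1.1]) := by
  ext x y
  rcases x with i | ⟨k, ⟨⟨a, b⟩, hab⟩⟩ <;> rcases y with j | ⟨l, ⟨⟨c, e⟩, hce⟩⟩
  · by_cases hij : i = j
    · subst hij
      simp [X3, (h i).1]
    · simp [X3, hij]
  · have hce' : c < e := hce
    fin_cases l <;>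
      simp only [submatrix_apply, pairEquiv_inl, pairEquiv_inr, fromBlocks_apply₁₂,
        Matrix.zero_apply, X3, of_apply] <;>
      norm_num <;>
      split_ifs <;> first | (exfalso; omega) | simp
  · have hab' : a < b := hab
    fin_cases k <;>
      simp only [submatrix_apply, pairEquiv_inl, pairEquiv_inr, fromBlocks_apply₂₁,
        Matrix.zero_apply, X3, of_apply] <;>
      norm_num <;>
      split_ifs <;> first | (exfalso; omega) | simp
  · have hab' : a < b := hab
    have hce' : c < e := hce
    fin_cases k <;> fin_cases l <;>
      simp only [submatrix_apply, pairEquiv_inr, fromBlocks_apply₂₂, blockDiagonal_apply,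
        X3, of_apply, Subtype.mk.injEq, Prod.mk.injEq] <;>
      norm_num <;>
      split_ifs <;> first | (exfalso; omega) | simp

/-- block decomposition of an LDOI matrix, with the resulting
spectrum and rank formulas. -/
theorem stmt_3 {d : ℕ} (A B C : Matrix (Fin d) (Fin d) ℂ) (h : EqDiag A B C) :
    (∃ e : (Fin d ⊕ (Fin 2 × {p : Fin d × Fin d // p.1 < p.2})) ≃ (Fin d × Fin d),
      (X3 A B C).submatrix e e =
        Matrix.fromBlocks B 0 0
          (Matrix.blockDiagonal fun p : {p : Fin d × Fin d // p.1 < p.2} =>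
            !![A p.1.1 p.1.2, C p.1.1 p.1.2; C p.1.2 p.1.1, A p.1.2 p.1.1])) ∧
    (spectrum ℂ (X3 A B C) =
      spectrum ℂ B ∪ ⋃ p : {p : Fin d × Fin d // p.1 < p.2},
        spectrum ℂ !![A p.1.1 p.1.2, C p.1.1 p.1.2; C p.1.2 p.1.1, A p.1.2 p.1.1]) ∧
    ((X3 A B C).rank =
      B.rank + ∑ p : {p : Fin d × Fin d // p.1 < p.2},
        (!![A p.1.1 p.1.2, C p.1.1 p.1.2; C p.1.2 p.1.1, A p.1.2 p.1.1]).rank) := by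
  classical
  have hsub := submatrix_X3_eq A B C h
  refine ⟨⟨pairEquiv d, hsub⟩, ?_, ?_⟩
  · have h1 : spectrum ℂ (X3 A B C)
        = spectrum ℂ ((X3 A B C).submatrix (pairEquiv d) (pairEquiv d)) := by
      have h2 : (X3 A B C).submatrix (pairEquiv d) (pairEquiv d)
          = (reindexAlgEquiv ℂ ℂ (pairEquiv d).symm) (X3 A B C) := by
        simp [reindexAlgEquiv_apply, reindex_apply]
      rw [h2, AlgEquiv.spectrum_eq]
    rw [h1, hsub, spectrum_fromBlocks_zero, spectrum_blockDiagonal]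
  · have h2 : (X3 A B C).rank
        = ((X3 A B C).submatrix (pairEquiv d) (pairEquiv d)).rank :=
      (rank_submatrix _ _ _).symm
    rw [h2, hsub, rank_fromBlocks_zero, rank_blockDiagonal']
end

section
/- If X₁ and X₂ are LDOI matrices parametrized by triples (A₁,B₁,C₁) and (A₂,B₂,C₂) respectively, then the matrix product X₁X₂ is the LDOI matrix parametrized by (A,B,C) where A = A₁⊙A₂ + C₁⊙C₂ᵀ + diag(B₁B₂ − A₁⊙A₂ − C₁⊙C₂ᵀ), B = B₁B₂, and C = A₁⊙C₂ + C₁⊙A₂ᵀ + diag(B₁B₂ − A₁⊙C₂ − C₁⊙A₂ᵀ). Here ⊙ denotes the entrywise (Hadamard) product. -/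
open Matrix

private lemma sum_ite_const {α : Type*} [Fintype α] {M : Type*} [AddCommMonoid M]
    (p : Prop) [Decidable p] (f : α → M) :
    (∑ x : α, if p then f x else 0) = if p then ∑ x : α, f x else 0 := by
  split <;> simp

private lemma sum_ite_ne {α : Type*} [Fintype α] [DecidableEq α] {M : Type*}
    [AddCommGroup M] (k : α) (f : α → M) :
    (∑ x : α, if ¬x = k then f x else 0) = (∑ x : α, f x) - f k := by
  have hk : (∑ x : α, if x = k then f x else 0) = f k := by simp
  rw [eq_sub_iff_add_eq, ← hk, ← Finset.sum_add_distrib]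
  exact Finset.sum_congr rfl fun x _ => by by_cases h : x = k <;> simp [h]

private lemma sum_ite_ne' {α : Type*} [Fintype α] [DecidableEq α] {M : Type*}
    [AddCommGroup M] (k : α) (f : α → M) :
    (∑ x : α, if ¬k = x then f x else 0) = (∑ x : α, f x) - f k := by
  rw [← sum_ite_ne k f]
  exact Finset.sum_congr rfl fun x _ => by simp [eq_comm]

set_option maxHeartbeats 1600000 in
/-- product of two LDOI matrices. `⊙` is the Hadamard product. -/
theorem stmt_4 {d : ℕ} (A₁ B₁ C₁ A₂ B₂ C₂ : Matrix (Fin d) (Fin d) ℂ)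
    (h₁ : EqDiag A₁ B₁ C₁) (h₂ : EqDiag A₂ B₂ C₂) :
    X3 A₁ B₁ C₁ * X3 A₂ B₂ C₂ =
      X3 (A₁.hadamard A₂ + C₁.hadamard C₂ᵀ +
            Matrix.diagonal (fun i =>
              (B₁ * B₂ - A₁.hadamard A₂ - C₁.hadamard C₂ᵀ) i i))
         (B₁ * B₂)
         (A₁.hadamard C₂ + C₁.hadamard A₂ᵀ +
            Matrix.diagonal (fun i =>
              (B₁ * B₂ - A₁.hadamard C₂ - C₁.hadamard A₂ᵀ) i i)) := by
  ext ⟨i, j⟩ ⟨k, l⟩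
  rw [Matrix.mul_apply, Fintype.sum_prod_type]
  simp only [X3, of_apply, Matrix.add_apply, Matrix.sub_apply, Matrix.diagonal_apply,
    Matrix.hadamard_apply, Matrix.transpose_apply, Matrix.mul_apply,
    add_mul, mul_add, ite_mul, mul_ite, mul_zero, zero_mul, zero_add, add_zero,
    Finset.sum_add_distrib, ite_and, sum_ite_const, sum_ite_ne, sum_ite_ne',
    Finset.sum_ite_eq, Finset.sum_ite_eq', Finset.mem_univ, if_true, ne_eq]
  have e1 := fun i => (h₁ i).1
  have e2 := fun i => (h₁ i).2
  have e3 := fun i => (h₂ i).1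
  have e4 := fun i => (h₂ i).2
  split_ifs <;> subst_vars <;> first
    | ring1
    | (simp only [e1, e2, e3, e4]; ring1)
    | (exact absurd rfl (by assumption))
end

section
/- An LDOI matrix X parametrized by (A,B,C) is unitary if and only if: (i) B is unitary; (ii) for all i < j there exists a phase ω_{ij} with |ω_{ij}| = 1 such that A_{ji} = ω_{ij}·conj(A_{ij}) and C_{ji} = −ω_{ij}·conj(C_{ij}); and (iii) |A_{ij}|² + |C_{ij}|² = 1 for all i < j. -/
open Matrix

/-!
Given equal diagonals, `X3 A B C` acts as `B` on the span of the `|ii⟩` and, for each `i < j`,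
as the block `!![A i j, C i j; C j i, A j i]` on the span of `|ij⟩, |ji⟩`; these subspaces are
mutually orthogonal, so `X3 A B C` is unitary iff `B` and all these blocks are. A `2 × 2` matrix
`!![a, c; c', a']` is unitary iff its first row is a unit vector and `(a', c') = ω • (ā, -c̄)`
with `|ω| = 1`, where `ω` is necessarily its determinant.
-/

lemma Matrix.fin_two_mul_conjTranspose_eq_one_iff {R : Type*} [CommRing R] [StarRing R]
    (a b c e : R) :
    !![a, b; c, e] * (!![a, b; c, e])ᴴ = 1 ↔
      (a * star a + b * star b = 1 ∧ a * star c + b * star e = 0) ∧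
        (e * star e + c * star c = 1 ∧ e * star b + c * star a = 0) := by
  rw [← Matrix.ext_iff, Fin.forall_fin_two, Fin.forall_fin_two, Fin.forall_fin_two]
  simp only [Fin.isValue, mul_apply, of_apply, cons_val', cons_val_fin_one, cons_val_zero,
    conjTranspose_apply, Fin.sum_univ_two, cons_val_one, one_apply_eq, ne_eq, zero_ne_one,
    not_false_eq_true, one_apply_ne, add_comm (c * star _), one_ne_zero, and_congr_right_iff,
    and_imp]
  tauto

lemma pairwise_iff_forall_lt_and {ι : Type*} [LinearOrder ι] {p : ι → ι → Prop} :
    Pairwise p ↔ ∀ ⦃i j⦄, i < j → p i j ∧ p j i := by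
  simp only [Pairwise, ← lt_or_lt_iff_ne, or_imp, forall_and]
  constructor <;> rintro ⟨h₁, h₂⟩ <;> exact ⟨h₁, fun i j hij => h₂ j i hij⟩

lemma EqDiag.transpose {R : Type*} [CommRing R] {d : ℕ} {A B C : Matrix (Fin d) (Fin d) R}
    (h : EqDiag A B C) : EqDiag A Bᵀ Cᵀ :=
  h

section X3

variable {R : Type*} [CommRing R] {d : ℕ} (A B C : Matrix (Fin d) (Fin d) R)

lemma X3_transpose : (X3 A B C)ᵀ = X3 A Bᵀ Cᵀ := by
  ext ⟨i, j⟩ ⟨k, l⟩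
  simp only [X3, Matrix.transpose_apply, Matrix.of_apply]
  split_ifs <;> (try casesm* _ ∧ _) <;> subst_vars <;> tauto

lemma X3_apply_diag_left (h : EqDiag A B C) (i : Fin d) (r : Fin d × Fin d) :
    X3 A B C (i, i) r = if r.1 = r.2 then B i r.1 else 0 := by
  obtain ⟨k, l⟩ := r
  simp only [X3, Matrix.of_apply]
  rcases eq_or_ne k l with rfl | hkl
  · rcases eq_or_ne i k with rfl | hik
    · simp [(h i).1]
    · simp [hik]
  · have : ¬ (i = k ∧ i = l) := fun hc => hkl (hc.1 ▸ hc.2)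
    simp [hkl, this]

lemma X3_apply_of_ne_left {i j : Fin d} (hij : i ≠ j) (r : Fin d × Fin d) :
    X3 A B C (i, j) r =
      (if r = (i, j) then A i j else 0) + (if r = (j, i) then C i j else 0) := by
  obtain ⟨k, l⟩ := r
  simp only [X3, Matrix.of_apply, Prod.mk.injEq]
  split_ifs <;> (try casesm* _ ∧ _) <;> subst_vars <;> first | tauto | ring

lemma X3_apply_diag_right (h : EqDiag A B C) (p : Fin d × Fin d) (k : Fin d) :
    X3 A B C p (k, k) = if p.1 = p.2 then B p.1 k else 0 := by
  rw [← Matrix.transpose_apply (X3 A B C), X3_transpose, X3_apply_diag_left _ _ _ h.transpose]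
  rfl

lemma X3_apply_of_ne_right (p : Fin d × Fin d) {i j : Fin d} (hij : i ≠ j) :
    X3 A B C p (i, j) =
      (if p = (i, j) then A i j else 0) + (if p = (j, i) then C j i else 0) := by
  rw [← Matrix.transpose_apply (X3 A B C), X3_transpose, X3_apply_of_ne_left _ _ _ hij]
  rfl

variable [StarRing R]

lemma X3_mul_conjTranspose_apply_diag_left (h : EqDiag A B C) (i : Fin d) (q : Fin d × Fin d) :
    (X3 A B C * (X3 A B C)ᴴ) (i, i) q = if q.1 = q.2 then (B * Bᴴ) i q.1 else 0 := by
  rw [Matrix.mul_apply, Fintype.sum_prod_type]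
  simp only [Matrix.conjTranspose_apply, X3_apply_diag_left A B C h, ite_mul, zero_mul,
    Finset.sum_ite_eq, Finset.mem_univ, if_true, X3_apply_diag_right A B C h]
  split_ifs <;> simp [Matrix.mul_apply]

lemma X3_mul_conjTranspose_apply_of_ne_left {i j : Fin d} (hij : i ≠ j) (q : Fin d × Fin d) :
    (X3 A B C * (X3 A B C)ᴴ) (i, j) q =
      if q = (i, j) then A i j * star (A i j) + C i j * star (C i j)
      else if q = (j, i) then A i j * star (C j i) + C i j * star (A j i) else 0 := by
  have hswap : (j, i) ≠ (i, j) := by simp [hij.symm]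
  simp only [Matrix.mul_apply, Matrix.conjTranspose_apply, X3_apply_of_ne_left A B C hij,
    add_mul, ite_mul, zero_mul, Finset.sum_add_distrib, Finset.sum_ite_eq', Finset.mem_univ,
    if_true, X3_apply_of_ne_right A B C _ hij, X3_apply_of_ne_right A B C _ hij.symm]
  split_ifs <;> subst_vars <;> simp_all

lemma X3_mul_conjTranspose_eq_one_iff (h : EqDiag A B C) :
    X3 A B C * (X3 A B C)ᴴ = 1 ↔
      B * Bᴴ = 1 ∧ Pairwise fun i j =>
        A i j * star (A i j) + C i j * star (C i j) = 1 ∧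
          A i j * star (C j i) + C i j * star (A j i) = 0 := by
  constructor
  · intro hX
    refine ⟨?_, fun i j hij => ?_⟩
    · ext i k
      simpa [X3_mul_conjTranspose_apply_diag_left A B C h, Matrix.one_apply] using
        congr_fun₂ hX (i, i) (k, k)
    · have h1 := congr_fun₂ hX (i, j) (i, j)
      have h2 := congr_fun₂ hX (i, j) (j, i)
      simp only [X3_mul_conjTranspose_apply_of_ne_left A B C hij, ↓reduceIte, one_apply_eq,
        Prod.mk.injEq, hij.symm, hij, and_self, ne_eq, not_false_eq_true, one_apply_ne] at h1 h2
      exact ⟨h1, h2⟩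
  · rintro ⟨hB, hAC⟩
    ext ⟨i, j⟩ q
    rcases eq_or_ne i j with rfl | hij
    · rw [X3_mul_conjTranspose_apply_diag_left A B C h, hB]
      obtain ⟨k, l⟩ := q
      by_cases hkl : k = l
      · simp [Matrix.one_apply, hkl]
      · rw [if_neg hkl, Matrix.one_apply_ne]
        grind
    · rw [X3_mul_conjTranspose_apply_of_ne_left A B C hij]
      split_ifs with h1 h2
      · subst h1; simp [(hAC hij).1]
      · subst h2; simp [(hAC hij).2, hij]
      · rw [Matrix.one_apply_ne (Ne.symm h1)]

theorem X3_mem_unitaryGroup_iff (h : EqDiag A B C) :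
    X3 A B C ∈ unitaryGroup (Fin d × Fin d) R ↔
      B ∈ unitaryGroup (Fin d) R ∧
        ∀ ⦃i j⦄, i < j → !![A i j, C i j; C j i, A j i] ∈ unitaryGroup (Fin 2) R := by
  simp only [mem_unitaryGroup_iff, star_eq_conjTranspose, pairwise_iff_forall_lt_and,
    X3_mul_conjTranspose_eq_one_iff A B C h, fin_two_mul_conjTranspose_eq_one_iff]

end X3

open ComplexConjugate in
theorem Complex.fin_two_mem_unitaryGroup_iff (a c c' a' : ℂ) :
    !![a, c; c', a'] ∈ unitaryGroup (Fin 2) ℂ ↔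
      (∃ ω : ℂ, ‖ω‖ = 1 ∧ a' = ω * conj a ∧ c' = -(ω * conj c)) ∧ ‖a‖ ^ 2 + ‖c‖ ^ 2 = 1 := by
  have hnorm : ∀ z : ℂ, z * conj z = (‖z‖ ^ 2 : ℝ) := fun z => by
    rw [Complex.mul_conj']; norm_cast
  constructor
  · intro hM
    have hdet : ‖a * a' - c * c'‖ = 1 := by
      rw [← det_fin_two_of]; exact CStarRing.norm_of_mem_unitary (det_of_mem_unitary hM)
    rw [mem_unitaryGroup_iff, star_eq_conjTranspose, fin_two_mul_conjTranspose_eq_one_iff] at hM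
    obtain ⟨⟨haa, hac⟩, -⟩ := hM
    have hac' := congrArg conj hac
    simp only [Complex.star_def, map_add, map_mul, Complex.conj_conj, map_zero] at haa hac'
    refine ⟨⟨a * a' - c * c', hdet, ?_, ?_⟩, ?_⟩
    · linear_combination (-a') * haa + c * hac'
    · linear_combination (-c') * haa + a * hac'
    · rw [hnorm, hnorm] at haa; exact_mod_cast haa
  · rintro ⟨⟨ω, hω, rfl, rfl⟩, hac⟩
    have hωω : ω * conj ω = 1 := by rw [hnorm, hω]; norm_num
    have hac' : a * conj a + c * conj c = 1 := by rw [hnorm, hnorm]; exact_mod_cast hac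
    rw [mem_unitaryGroup_iff, star_eq_conjTranspose, fin_two_mul_conjTranspose_eq_one_iff]
    simp only [Complex.star_def, map_neg, map_mul, Complex.conj_conj]
    refine ⟨⟨hac', by ring⟩, ?_, by ring⟩
    linear_combination (ω * conj ω) * hac' + hωω

/-- unitarity characterization of LDOI matrices. -/
theorem stmt_5 {d : ℕ} (A B C : Matrix (Fin d) (Fin d) ℂ) (h : EqDiag A B C) :
    X3 A B C ∈ Matrix.unitaryGroup (Fin d × Fin d) ℂ ↔
      (B ∈ Matrix.unitaryGroup (Fin d) ℂ ∧
       (∀ i j : Fin d, i < j → ∃ ω : ℂ, ‖ω‖ = 1 ∧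
          A j i = ω * starRingEnd ℂ (A i j) ∧
          C j i = -(ω * starRingEnd ℂ (C i j))) ∧
       (∀ i j : Fin d, i < j →
          ‖A i j‖ ^ 2 + ‖C i j‖ ^ 2 = 1)) := by
  simp only [X3_mem_unitaryGroup_iff A B C h, Complex.fin_two_mem_unitaryGroup_iff, imp_and,
    forall_and]
end

section
/- An LDOI matrix X parametrized by (A,B,C) is unitary if and only if B is unitary and for all i < j the 2×2 matrix [[A_{ij}, C_{ij}],[C_{ji}, A_{ji}]] is unitary. Consequently, the group of unitary LDOI matrices in M_d(C)⊗M_d(C) is isomorphic to U(d) × U(2)^{d(d−1)/2}. -/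
open Matrix

section Aux

variable {d : ℕ} {A B C A' B' C' : Matrix (Fin d) (Fin d) ℂ} {i j k : Fin d}

lemma X3_apply_diag (h : EqDiag A B C) (i : Fin d) (q : Fin d × Fin d) :
    X3 A B C (i, i) q = if q.1 = q.2 then B i q.1 else 0 := by
  obtain ⟨a, b⟩ := q
  rcases eq_or_ne a b with rfl | hab
  · rcases eq_or_ne i a with rfl | hia
    · simp [X3, (h i).1]
    · simp [X3, hia]
  · have h1 : ¬(i = a ∧ i = b) := by rintro ⟨rfl, rfl⟩; exact hab rfl
    simp [X3, hab, h1]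

lemma X3_apply_offdiag (h : i ≠ j) (q : Fin d × Fin d) :
    X3 A B C (i, j) q = if q = (i, j) then A i j else if q = (j, i) then C i j else 0 := by
  obtain ⟨a, b⟩ := q
  by_cases h1 : a = i ∧ b = j
  · obtain ⟨rfl, rfl⟩ := h1
    simp [X3, h]
  · by_cases h2 : a = j ∧ b = i
    · have hA : ¬(i = a ∧ j = b) := fun ⟨x, _⟩ => h (x.trans h2.1)
      have hB : ¬(i = j ∧ a = b ∧ i ≠ a) := fun ⟨x, _⟩ => h x
      have hC : i = b ∧ j = a ∧ i ≠ j := ⟨h2.2.symm, h2.1.symm, h⟩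
      have r1 : ((a, b) : Fin d × Fin d) ≠ (i, j) := by
        simp only [ne_eq, Prod.mk.injEq, not_and]
        intro e1 _; exact h (h2.1.symm.trans e1).symm
      have r2 : ((a, b) : Fin d × Fin d) = (j, i) := by rw [h2.1, h2.2]
      simp only [X3, of_apply]
      rw [if_neg hA, if_neg hB, if_pos hC, if_neg r1, if_pos r2]
      ring
    · have e1 : ¬(i = a ∧ j = b) := fun ⟨x, y⟩ => h1 ⟨x.symm, y.symm⟩
      have hB : ¬(i = j ∧ a = b ∧ i ≠ a) := fun ⟨x, _⟩ => h x
      have e2 : ¬(i = b ∧ j = a ∧ i ≠ j) := fun ⟨x, y, _⟩ => h2 ⟨y.symm, x.symm⟩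
      have r1 : ((a, b) : Fin d × Fin d) ≠ (i, j) := by
        simp only [ne_eq, Prod.mk.injEq]; exact h1
      have r2 : ((a, b) : Fin d × Fin d) ≠ (j, i) := by
        simp only [ne_eq, Prod.mk.injEq]; exact h2
      simp only [X3, of_apply]
      rw [if_neg e1, if_neg hB, if_neg e2, if_neg r1, if_neg r2]
      ring

lemma eqDiag_star (h : EqDiag A B C) : EqDiag (A.map star) Bᴴ Cᴴ := by
  intro i
  simp [map_apply, conjTranspose_apply, (h i).1, (h i).2]

lemma X3_conjTranspose : (X3 A B C)ᴴ = X3 (A.map star) Bᴴ Cᴴ := by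
  ext ⟨i, j⟩ ⟨k, l⟩
  simp only [conjTranspose_apply, X3, of_apply, star_add, star_zero,
    apply_ite (star : ℂ → ℂ), map_apply]
  congr 1
  · congr 1
    · by_cases hc : i = k ∧ j = l
      · obtain ⟨rfl, rfl⟩ := hc; simp
      · rw [if_neg (fun ⟨x, y⟩ => hc ⟨x.symm, y.symm⟩), if_neg hc]
    · by_cases hc : i = j ∧ k = l ∧ i ≠ k
      · obtain ⟨rfl, e, hn⟩ := hc
        rw [if_pos ⟨e, rfl, fun x => hn x.symm⟩, if_pos ⟨rfl, e, hn⟩]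
      · rw [if_neg (fun ⟨x, y, z⟩ => hc ⟨y, x, fun w => z w.symm⟩), if_neg hc]
  · by_cases hc : i = l ∧ j = k ∧ i ≠ j
    · obtain ⟨e1, e2, hn⟩ := hc
      have hkl : k ≠ l := fun w => hn ((e1.trans w.symm).trans e2.symm)
      rw [if_pos ⟨e2.symm, e1.symm, hkl⟩, if_pos ⟨e1, e2, hn⟩, e1, e2]
    · rw [if_neg ?h2, if_neg hc]
      rintro ⟨x, y, z⟩
      exact hc ⟨y.symm, x.symm, fun w => z ((x.trans w.symm).trans y.symm)⟩

/-- product parameters -/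
noncomputable def mA (A B C A' B' C' : Matrix (Fin d) (Fin d) ℂ) : Matrix (Fin d) (Fin d) ℂ :=
  Matrix.of fun i j => if i = j then (B * B') i j else A i j * A' i j + C i j * C' j i

noncomputable def mC (A B C A' B' C' : Matrix (Fin d) (Fin d) ℂ) : Matrix (Fin d) (Fin d) ℂ :=
  Matrix.of fun i j => if i = j then (B * B') i j else A i j * C' i j + C i j * A' j i


lemma eqDiag_m : EqDiag (mA A B C A' B' C') (B * B') (mC A B C A' B' C') := by
  intro i; constructor <;> simp [mA, mC]

lemma X3_mul (h : EqDiag A B C) (h' : EqDiag A' B' C') :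
    X3 A B C * X3 A' B' C' = X3 (mA A B C A' B' C') (B * B') (mC A B C A' B' C') := by
  ext ⟨i, j⟩ ⟨k, l⟩
  rw [Matrix.mul_apply]
  rcases eq_or_ne i j with rfl | hij
  · rw [X3_apply_diag eqDiag_m i (k, l)]
    simp only [X3_apply_diag h]
    rw [Fintype.sum_prod_type]
    simp only [ite_mul, zero_mul, Finset.sum_ite_eq, Finset.mem_univ, if_true]
    simp only [X3_apply_diag h']
    rcases eq_or_ne k l with rfl | hkl
    · simp [Matrix.mul_apply]
    · simp [hkl]
  · have nij : ((i, j) : Fin d × Fin d) ≠ (j, i) := by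
      simp only [ne_eq, Prod.mk.injEq, not_and]; exact fun e _ => hij e
    rw [X3_apply_offdiag hij (k, l)]
    simp only [X3_apply_offdiag hij]
    have expand : ∀ q : Fin d × Fin d,
        (if q = (i, j) then A i j else if q = (j, i) then C i j else 0) * X3 A' B' C' q (k, l)
          = (if q = (i, j) then A i j * X3 A' B' C' (i, j) (k, l) else 0) +
            (if q = (j, i) then C i j * X3 A' B' C' (j, i) (k, l) else 0) := by
      intro q
      by_cases e1 : q = (i, j)
      · subst e1; rw [if_pos rfl, if_pos rfl, if_neg nij, add_zero]
      · rw [if_neg e1, if_neg e1, zero_add]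
        by_cases e2 : q = (j, i)
        · subst e2; rw [if_pos rfl, if_pos rfl]
        · rw [if_neg e2, if_neg e2, zero_mul]
    rw [Finset.sum_congr rfl (fun q _ => expand q), Finset.sum_add_distrib]
    simp only [Finset.sum_ite_eq', Finset.mem_univ, if_true]
    rw [X3_apply_offdiag hij (k, l), X3_apply_offdiag hij.symm (k, l)]
    by_cases e1 : ((k, l) : Fin d × Fin d) = (i, j)
    · have ne2 : ((k, l) : Fin d × Fin d) ≠ (j, i) := by rw [e1]; exact nij
      rw [if_pos e1, if_neg ne2, if_pos e1, if_pos e1]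
      simp [mA, hij]
    · by_cases e2 : ((k, l) : Fin d × Fin d) = (j, i)
      · rw [if_neg e1, if_pos e2, if_pos e2, if_neg e1, if_pos e2]
        simp [mC, hij]
      · rw [if_neg e1, if_neg e2, if_neg e2, if_neg e1, if_neg e1, if_neg e2]
        ring

lemma X3_eq_one_iff (h : EqDiag A B C) :
    X3 A B C = 1 ↔ B = 1 ∧ ∀ i j : Fin d, i ≠ j → A i j = 1 ∧ C i j = 0 := by
  constructor
  · intro he
    refine ⟨?_, ?_⟩
    · ext i k
      have h1 := congrFun (congrFun he (i, i)) (k, k)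
      rw [X3_apply_diag h] at h1
      simpa [Matrix.one_apply, Prod.ext_iff] using h1
    · intro i j hij
      have h1 := congrFun (congrFun he (i, j)) (i, j)
      have h2 := congrFun (congrFun he (i, j)) (j, i)
      rw [X3_apply_offdiag hij] at h1 h2
      have nij : ((i, j) : Fin d × Fin d) ≠ (j, i) := by
        simp only [ne_eq, Prod.mk.injEq, not_and]; exact fun e _ => hij e
      constructor
      · simpa [Matrix.one_apply] using h1
      · rw [if_neg nij.symm, if_pos rfl] at h2
        simpa [Matrix.one_apply, Prod.ext_iff, hij] using h2
  · rintro ⟨hB, hAC⟩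
    ext ⟨i, j⟩ ⟨k, l⟩
    rcases eq_or_ne i j with rfl | hij
    · rw [X3_apply_diag h]
      rcases eq_or_ne k l with rfl | hkl
      · simp [hB, Matrix.one_apply, Prod.ext_iff]
      · have : ((i, i) : Fin d × Fin d) ≠ (k, l) := by
          simp only [ne_eq, Prod.mk.injEq, not_and]
          exact fun e1 e2 => hkl (e1.symm.trans e2)
        simp [hkl, Matrix.one_apply, this]
    · rw [X3_apply_offdiag hij]
      by_cases e1 : ((k, l) : Fin d × Fin d) = (i, j)
      · rw [if_pos e1, (hAC i j hij).1, Matrix.one_apply, if_pos e1.symm]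
      · rw [if_neg e1]
        by_cases e2 : ((k, l) : Fin d × Fin d) = (j, i)
        · rw [if_pos e2, (hAC i j hij).2, Matrix.one_apply,
            if_neg (fun w => e1 (w.symm : (k,l) = (i,j)))]
        · rw [if_neg e2, Matrix.one_apply, if_neg (fun w => e1 (w.symm : (k,l) = (i,j)))]

theorem X3_unitary_iff (h : EqDiag A B C) :
    X3 A B C ∈ Matrix.unitaryGroup (Fin d × Fin d) ℂ ↔
      (B ∈ Matrix.unitaryGroup (Fin d) ℂ ∧
       ∀ i j : Fin d, i < j → !![A i j, C i j; C j i, A j i] ∈ Matrix.unitaryGroup (Fin 2) ℂ) := by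
  rw [Matrix.mem_unitaryGroup_iff', Matrix.star_eq_conjTranspose, X3_conjTranspose,
    X3_mul (eqDiag_star h) h, X3_eq_one_iff eqDiag_m]
  constructor
  · rintro ⟨hB1, hoff⟩
    refine ⟨Matrix.mem_unitaryGroup_iff'.mpr (by rwa [Matrix.star_eq_conjTranspose]), ?_⟩
    intro i j hlt
    have hij : i ≠ j := ne_of_lt hlt
    rw [Matrix.mem_unitaryGroup_iff']
    have o1 := hoff i j hij
    have o2 := hoff j i hij.symm
    simp only [mA, mC, of_apply, if_neg hij, if_neg hij.symm, map_apply,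
      conjTranspose_apply] at o1 o2
    ext a b
    fin_cases a <;> fin_cases b <;>
      simp [Matrix.mul_apply, Fin.sum_univ_two, Matrix.one_apply, Matrix.star_apply] <;>
      simp only [← Complex.star_def] <;>
      first
      | linear_combination o1.1
      | linear_combination o1.2
      | linear_combination o2.1
      | linear_combination o2.2
  · rintro ⟨hB, hblk⟩
    refine ⟨?_, ?_⟩
    · rw [← Matrix.star_eq_conjTranspose]; exact Matrix.mem_unitaryGroup_iff'.mp hB
    · intro i j hij
      rcases hij.lt_or_gt with hlt | hlt
      · have hM := Matrix.mem_unitaryGroup_iff'.mp (hblk i j hlt)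
        have e00 := congrFun (congrFun hM 0) 0
        have e01 := congrFun (congrFun hM 0) 1
        simp [Matrix.mul_apply, Fin.sum_univ_two, Matrix.one_apply, Matrix.star_apply]
          at e00 e01
        simp only [← Complex.star_def] at e00 e01
        constructor <;>
          simp only [mA, mC, of_apply, if_neg hij, map_apply, conjTranspose_apply]
        · linear_combination e00
        · linear_combination e01
      · have hM := Matrix.mem_unitaryGroup_iff'.mp (hblk j i hlt)
        have e11 := congrFun (congrFun hM 1) 1
        have e10 := congrFun (congrFun hM 1) 0
        simp [Matrix.mul_apply, Fin.sum_univ_two, Matrix.one_apply, Matrix.star_apply]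
          at e11 e10
        simp only [← Complex.star_def] at e11 e10
        constructor <;>
          simp only [mA, mC, of_apply, if_neg hij, map_apply, conjTranspose_apply]
        · linear_combination e11
        · linear_combination e10

-- entry extraction
lemma X3_entry_AA (hij : i ≠ j) : X3 A B C (i, j) (i, j) = A i j := by
  rw [X3_apply_offdiag hij]; simp

lemma X3_entry_CC (hij : i ≠ j) : X3 A B C (i, j) (j, i) = C i j := by
  rw [X3_apply_offdiag hij]
  have : ((j, i) : Fin d × Fin d) ≠ (i, j) := by
    simp only [ne_eq, Prod.mk.injEq, not_and]; exact fun e _ => hij e.symm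
  rw [if_neg this, if_pos rfl]

lemma X3_entry_BB (h : EqDiag A B C) : X3 A B C (i, i) (k, k) = B i k := by
  rw [X3_apply_diag h]; simp

-- the parameter matrices of φ
noncomputable def phiA (U : Matrix (Fin d) (Fin d) ℂ)
    (f : {p : Fin d × Fin d // p.1 < p.2} → Matrix (Fin 2) (Fin 2) ℂ) :
    Matrix (Fin d) (Fin d) ℂ :=
  Matrix.of fun i j =>
    if h : i < j then f ⟨(i, j), h⟩ 0 0 else if h' : j < i then f ⟨(j, i), h'⟩ 1 1 else U i i

noncomputable def phiC (U : Matrix (Fin d) (Fin d) ℂ)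
    (f : {p : Fin d × Fin d // p.1 < p.2} → Matrix (Fin 2) (Fin 2) ℂ) :
    Matrix (Fin d) (Fin d) ℂ :=
  Matrix.of fun i j =>
    if h : i < j then f ⟨(i, j), h⟩ 0 1 else if h' : j < i then f ⟨(j, i), h'⟩ 1 0 else U i i

variable {U U' : Matrix (Fin d) (Fin d) ℂ}
  {f f' : {p : Fin d × Fin d // p.1 < p.2} → Matrix (Fin 2) (Fin 2) ℂ}

lemma eqDiag_phi (U : Matrix (Fin d) (Fin d) ℂ)
    (f : {p : Fin d × Fin d // p.1 < p.2} → Matrix (Fin 2) (Fin 2) ℂ) :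
    EqDiag (phiA U f) U (phiC U f) := by
  intro i; constructor <;> simp [phiA, phiC]

lemma phi_block (hlt : i < j) :
    !![phiA U f i j, phiC U f i j; phiC U f j i, phiA U f j i] = f ⟨(i, j), hlt⟩ := by
  have hn := lt_asymm hlt
  ext a b
  fin_cases a <;> fin_cases b <;> simp [phiA, phiC, hlt, hn]

noncomputable def phi0
    (x : Matrix.unitaryGroup (Fin d) ℂ ×
      ({p : Fin d × Fin d // p.1 < p.2} → Matrix.unitaryGroup (Fin 2) ℂ)) :
    Matrix (Fin d × Fin d) (Fin d × Fin d) ℂ :=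
  X3 (phiA (x.1 : Matrix (Fin d) (Fin d) ℂ) (fun p => (x.2 p : Matrix (Fin 2) (Fin 2) ℂ)))
     (x.1 : Matrix (Fin d) (Fin d) ℂ)
     (phiC (x.1 : Matrix (Fin d) (Fin d) ℂ) (fun p => (x.2 p : Matrix (Fin 2) (Fin 2) ℂ)))

lemma phi0_mem (x) : phi0 (d := d) x ∈ Matrix.unitaryGroup (Fin d × Fin d) ℂ := by
  refine (X3_unitary_iff (eqDiag_phi _ _)).mpr ⟨x.1.2, fun i j h => ?_⟩
  rw [phi_block h]
  exact (x.2 _).2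

lemma phi0_one : phi0 (d := d) 1 = 1 := by
  refine (X3_eq_one_iff (eqDiag_phi _ _)).mpr ⟨rfl, fun i j hij => ?_⟩
  rcases hij.lt_or_gt with h | h <;>
    constructor <;>
    simp [phiA, phiC, h, lt_asymm h, Matrix.one_apply]

set_option maxHeartbeats 1600000 in
lemma phi0_mul (x y) : phi0 (d := d) (x * y) = phi0 x * phi0 y := by
  rw [phi0, phi0, phi0, X3_mul (eqDiag_phi _ _) (eqDiag_phi _ _)]
  have hA : phiA (((x * y).1 : Matrix (Fin d) (Fin d) ℂ))
      (fun p => (((x * y).2 p : Matrix (Fin 2) (Fin 2) ℂ))) =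
      mA (phiA x.1 fun p => (x.2 p : Matrix (Fin 2) (Fin 2) ℂ)) x.1
         (phiC x.1 fun p => (x.2 p : Matrix (Fin 2) (Fin 2) ℂ))
         (phiA y.1 fun p => (y.2 p : Matrix (Fin 2) (Fin 2) ℂ)) y.1
         (phiC y.1 fun p => (y.2 p : Matrix (Fin 2) (Fin 2) ℂ)) := by
    ext i j
    rcases lt_trichotomy i j with h | rfl | h
    · simp [phiA, phiC, mA, h, lt_asymm h, ne_of_lt h, Matrix.mul_apply, Fin.sum_univ_two]
    · simp [phiA, mA]
    · simp [phiA, phiC, mA, h, lt_asymm h, (ne_of_lt h).symm, Matrix.mul_apply,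
        Fin.sum_univ_two]
      ring
  have hC : phiC (((x * y).1 : Matrix (Fin d) (Fin d) ℂ))
      (fun p => (((x * y).2 p : Matrix (Fin 2) (Fin 2) ℂ))) =
      mC (phiA x.1 fun p => (x.2 p : Matrix (Fin 2) (Fin 2) ℂ)) x.1
         (phiC x.1 fun p => (x.2 p : Matrix (Fin 2) (Fin 2) ℂ))
         (phiA y.1 fun p => (y.2 p : Matrix (Fin 2) (Fin 2) ℂ)) y.1
         (phiC y.1 fun p => (y.2 p : Matrix (Fin 2) (Fin 2) ℂ)) := by
    ext i j
    rcases lt_trichotomy i j with h | rfl | h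
    · simp [phiA, phiC, mC, h, lt_asymm h, ne_of_lt h, Matrix.mul_apply, Fin.sum_univ_two]
    · simp [phiC, mC]
    · simp [phiA, phiC, mC, h, lt_asymm h, (ne_of_lt h).symm, Matrix.mul_apply,
        Fin.sum_univ_two]
      ring
  rw [hA, hC]
  rfl

lemma phi0_injective {x y} (hm : phi0 (d := d) x = phi0 y) : x = y := by
  have hU : (x.1 : Matrix (Fin d) (Fin d) ℂ) = y.1 := by
    ext i k
    have h1 := congrFun (congrFun hm (i, i)) (k, k)
    rwa [phi0, phi0, X3_entry_BB (eqDiag_phi _ _), X3_entry_BB (eqDiag_phi _ _)] at h1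
  refine Prod.ext (Subtype.ext hU) (funext fun p => ?_)
  obtain ⟨⟨i, j⟩, hlt⟩ := p
  have hij : i ≠ j := ne_of_lt hlt
  apply Subtype.ext
  have eA : phiA (x.1 : Matrix (Fin d) (Fin d) ℂ) (fun p => (x.2 p : Matrix (Fin 2) (Fin 2) ℂ)) i j
      = phiA (y.1 : Matrix (Fin d) (Fin d) ℂ) (fun p => (y.2 p : Matrix (Fin 2) (Fin 2) ℂ)) i j := by
    have h1 := congrFun (congrFun hm (i, j)) (i, j)
    rwa [phi0, phi0, X3_entry_AA hij, X3_entry_AA hij] at h1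
  have eA' : phiA (x.1 : Matrix (Fin d) (Fin d) ℂ) (fun p => (x.2 p : Matrix (Fin 2) (Fin 2) ℂ)) j i
      = phiA (y.1 : Matrix (Fin d) (Fin d) ℂ) (fun p => (y.2 p : Matrix (Fin 2) (Fin 2) ℂ)) j i := by
    have h1 := congrFun (congrFun hm (j, i)) (j, i)
    rwa [phi0, phi0, X3_entry_AA hij.symm, X3_entry_AA hij.symm] at h1
  have eC : phiC (x.1 : Matrix (Fin d) (Fin d) ℂ) (fun p => (x.2 p : Matrix (Fin 2) (Fin 2) ℂ)) i j
      = phiC (y.1 : Matrix (Fin d) (Fin d) ℂ) (fun p => (y.2 p : Matrix (Fin 2) (Fin 2) ℂ)) i j := by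
    have h1 := congrFun (congrFun hm (i, j)) (j, i)
    rwa [phi0, phi0, X3_entry_CC hij, X3_entry_CC hij] at h1
  have eC' : phiC (x.1 : Matrix (Fin d) (Fin d) ℂ) (fun p => (x.2 p : Matrix (Fin 2) (Fin 2) ℂ)) j i
      = phiC (y.1 : Matrix (Fin d) (Fin d) ℂ) (fun p => (y.2 p : Matrix (Fin 2) (Fin 2) ℂ)) j i := by
    have h1 := congrFun (congrFun hm (j, i)) (i, j)
    rwa [phi0, phi0, X3_entry_CC hij.symm, X3_entry_CC hij.symm] at h1
  calc (x.2 ⟨(i, j), hlt⟩ : Matrix (Fin 2) (Fin 2) ℂ)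
      = !![phiA (x.1 : Matrix (Fin d) (Fin d) ℂ) (fun p => (x.2 p : Matrix (Fin 2) (Fin 2) ℂ)) i j,
           phiC _ (fun p => (x.2 p : Matrix (Fin 2) (Fin 2) ℂ)) i j;
           phiC _ (fun p => (x.2 p : Matrix (Fin 2) (Fin 2) ℂ)) j i,
           phiA _ (fun p => (x.2 p : Matrix (Fin 2) (Fin 2) ℂ)) j i] :=
        (phi_block (U := (x.1 : Matrix (Fin d) (Fin d) ℂ))
          (f := fun p => (x.2 p : Matrix (Fin 2) (Fin 2) ℂ)) hlt).symm
    _ = !![phiA (y.1 : Matrix (Fin d) (Fin d) ℂ) (fun p => (y.2 p : Matrix (Fin 2) (Fin 2) ℂ)) i j,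
           phiC _ (fun p => (y.2 p : Matrix (Fin 2) (Fin 2) ℂ)) i j;
           phiC _ (fun p => (y.2 p : Matrix (Fin 2) (Fin 2) ℂ)) j i,
           phiA _ (fun p => (y.2 p : Matrix (Fin 2) (Fin 2) ℂ)) j i] := by
        rw [eA, eA', eC, eC']
    _ = (y.2 ⟨(i, j), hlt⟩ : Matrix (Fin 2) (Fin 2) ℂ) :=
        phi_block (U := (y.1 : Matrix (Fin d) (Fin d) ℂ))
          (f := fun p => (y.2 p : Matrix (Fin 2) (Fin 2) ℂ)) hlt


end Aux

/-- an LDOI matrix is unitary iff `B` and the 2×2 blocks are unitary;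
the unitary LDOI matrices form a group isomorphic to `U(d) × U(2)^{d(d-1)/2}`. -/
theorem stmt_6 (d : ℕ) :
    (∀ A B C : Matrix (Fin d) (Fin d) ℂ, EqDiag A B C →
      (X3 A B C ∈ Matrix.unitaryGroup (Fin d × Fin d) ℂ ↔
        (B ∈ Matrix.unitaryGroup (Fin d) ℂ ∧
         ∀ i j : Fin d, i < j →
           !![A i j, C i j; C j i, A j i] ∈ Matrix.unitaryGroup (Fin 2) ℂ))) ∧
    (∃ φ : (Matrix.unitaryGroup (Fin d) ℂ ×
              ({p : Fin d × Fin d // p.1 < p.2} → Matrix.unitaryGroup (Fin 2) ℂ)) →*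
             Matrix.unitaryGroup (Fin d × Fin d) ℂ,
      Function.Injective φ ∧
      Set.range (fun x => (φ x : Matrix (Fin d × Fin d) (Fin d × Fin d) ℂ)) =
        {X | (∃ A B C : Matrix (Fin d) (Fin d) ℂ, EqDiag A B C ∧ X = X3 A B C) ∧
             X ∈ Matrix.unitaryGroup (Fin d × Fin d) ℂ}) := by
  refine ⟨fun A B C h => X3_unitary_iff h, ?_⟩
  refine ⟨{ toFun := fun x => ⟨phi0 x, phi0_mem x⟩,
            map_one' := Subtype.ext phi0_one,
            map_mul' := fun x y => Subtype.ext (phi0_mul x y) }, ?_, ?_⟩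
  · intro x y hxy
    exact phi0_injective (congrArg Subtype.val hxy)
  · ext X
    constructor
    · rintro ⟨x, rfl⟩
      exact ⟨⟨_, _, _, eqDiag_phi _ _, rfl⟩, phi0_mem x⟩
    · rintro ⟨⟨A, B, C, hd, rfl⟩, hu⟩
      obtain ⟨hB, hblk⟩ := (X3_unitary_iff hd).mp hu
      refine ⟨(⟨B, hB⟩, fun p =>
        ⟨!![A p.1.1 p.1.2, C p.1.1 p.1.2; C p.1.2 p.1.1, A p.1.2 p.1.1], hblk _ _ p.2⟩), ?_⟩
      show phi0 _ = X3 A B C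
      rw [phi0]
      have hA : phiA B (fun p =>
          ((!![A p.1.1 p.1.2, C p.1.1 p.1.2; C p.1.2 p.1.1, A p.1.2 p.1.1] :
            Matrix (Fin 2) (Fin 2) ℂ))) = A := by
        ext i j
        rcases lt_trichotomy i j with h | rfl | h
        · simp [phiA, h]
        · simp [phiA, (hd i).1.symm]
        · simp [phiA, h, lt_asymm h]
      have hC : phiC B (fun p =>
          ((!![A p.1.1 p.1.2, C p.1.1 p.1.2; C p.1.2 p.1.1, A p.1.2 p.1.1] :
            Matrix (Fin 2) (Fin 2) ℂ))) = C := by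
        ext i j
        rcases lt_trichotomy i j with h | rfl | h
        · simp [phiC, h]
        · simp [phiC, (hd i).2.symm]
        · simp [phiC, h, lt_asymm h]
      rw [hA, hC]
end

section
/- An LDUI matrix X parametrized by (A,C) (i.e. X = Σ_{i,j} A_{ij}|ij⟩⟨ij| + Σ_{i≠j} C_{ij}|ij⟩⟨ji|) is unitary if and only if: (i) A_{ii} = C_{ii} and |A_{ii}| = 1 for all i; (ii) for all i < j there exists ω_{ij} with |ω_{ij}|=1 such that A_{ji} = ω_{ij}·conj(A_{ij}) and C_{ji} = −ω_{ij}·conj(C_{ij}); and (iii) |A_{ij}|² + |C_{ij}|² = 1 for all i < j. -/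
open Matrix

/-!
Indexing rows and columns by pairs `(i, j)`, the LDUI matrix only couples `(i, j)` with itself
and with `(j, i)`: it is block diagonal with `1 × 1` blocks `A i i` and, for `i < j`, the
`2 × 2` blocks `!![A i j, C i j; C j i, A j i]`. So it is unitary iff every block is, and a
`2 × 2` matrix with unit first row `(a, c)` is unitary iff its second row is `ω • (-c̄, ā)` with
`|ω| = 1`.
-/

open ComplexConjugate

-- The phase is the determinant `ω = a a' - c c'` of `!![a, c; c', a']`.
theorem orthonormal_second_row_iff {a c a' c' : ℂ} (h : ‖a‖ ^ 2 + ‖c‖ ^ 2 = 1) :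
    (‖a'‖ ^ 2 + ‖c'‖ ^ 2 = 1 ∧ a * conj c' + c * conj a' = 0) ↔
      ∃ ω : ℂ, ‖ω‖ = 1 ∧ a' = ω * conj a ∧ c' = -(ω * conj c) := by
  have hC : (‖a‖ ^ 2 + ‖c‖ ^ 2 : ℂ) = 1 := by exact_mod_cast h
  have norm_sq_phase (ω : ℂ) : ‖ω * conj a‖ ^ 2 + ‖-(ω * conj c)‖ ^ 2 = ‖ω‖ ^ 2 := by
    rw [norm_neg, norm_mul, norm_mul, Complex.norm_conj, Complex.norm_conj, mul_pow,
      mul_pow, ← mul_add, h, mul_one]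
  constructor
  · rintro ⟨hnorm, horth⟩
    have horth' : conj a * c' + conj c * a' = 0 := by
      simpa using congrArg conj horth
    obtain ⟨ω, hω⟩ : ∃ ω, ω = a * a' - c * c' := ⟨_, rfl⟩
    have ha' : a' = ω * conj a := by
      linear_combination -a' * hC - a' * Complex.mul_conj' a - a' * Complex.mul_conj' c
        + c * horth' - conj a * hω
    have hc' : c' = -(ω * conj c) := by
      linear_combination -c' * hC - c' * Complex.mul_conj' a - c' * Complex.mul_conj' c
        + a * horth' + conj c * hω
    refine ⟨ω, ?_, ha', hc'⟩
    rw [ha', hc', norm_sq_phase] at hnorm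
    exact (pow_eq_one_iff_of_nonneg (norm_nonneg _) two_ne_zero).mp hnorm
  · rintro ⟨ω, hω, rfl, rfl⟩
    refine ⟨by rw [norm_sq_phase, hω, one_pow], ?_⟩
    simp only [map_neg, map_mul, Complex.conj_conj]
    ring

theorem rows_orthonormal_iff_exists_phase {a c a' c' : ℂ} :
    ((‖a‖ ^ 2 + ‖c‖ ^ 2 = 1 ∧ a * conj c' + c * conj a' = 0) ∧
        (‖a'‖ ^ 2 + ‖c'‖ ^ 2 = 1 ∧ a' * conj c + c' * conj a = 0)) ↔
      ‖a‖ ^ 2 + ‖c‖ ^ 2 = 1 ∧ ∃ ω : ℂ, ‖ω‖ = 1 ∧ a' = ω * conj a ∧ c' = -(ω * conj c) := by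
  have horth_comm : a' * conj c + c' * conj a = 0 ↔ a * conj c' + c * conj a' = 0 := by
    rw [← (RingHom.injective (starRingEnd ℂ)).eq_iff]
    simp only [map_add, map_mul, Complex.conj_conj, map_zero]
    constructor <;> intro h <;> linear_combination h
  rw [horth_comm]
  constructor
  · rintro ⟨⟨hnorm, horth⟩, hnorm', -⟩
    exact ⟨hnorm, (orthonormal_second_row_iff hnorm).1 ⟨hnorm', horth⟩⟩
  · rintro ⟨hnorm, hphase⟩
    obtain ⟨hnorm', horth⟩ := (orthonormal_second_row_iff hnorm).2 hphase
    exact ⟨⟨hnorm, horth⟩, hnorm', horth⟩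

section
variable {d : ℕ} {R : Type*} [CommRing R] (A C : Matrix (Fin d) (Fin d) R)

def ldui : Matrix (Fin d × Fin d) (Fin d × Fin d) R :=
  X3 A (diagonal fun i => A i i) C

theorem ldui_apply_self (i j : Fin d) : ldui A C (i, j) (i, j) = A i j := by
  simp only [ldui, X3, of_apply]
  split_ifs <;> grind [diagonal_apply_ne]

theorem ldui_apply_swap {i j : Fin d} (h : i ≠ j) : ldui A C (i, j) (j, i) = C i j := by
  simp [ldui, X3, h, Ne.symm h]

theorem ldui_apply_of_ne {i j k l : Fin d} (h : (k, l) ≠ (i, j)) (h' : (k, l) ≠ (j, i)) :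
    ldui A C (i, j) (k, l) = 0 := by
  simp only [ne_eq, Prod.mk.injEq] at h h'
  simp only [ldui, X3, of_apply]
  split_ifs <;> grind [diagonal_apply_ne]

end

section
variable {d : ℕ} (A C : Matrix (Fin d) (Fin d) ℂ)

theorem ldui_mul_conjTranspose_apply (i j : Fin d) (q : Fin d × Fin d) :
    (ldui A C * (ldui A C)ᴴ) (i, j) q =
      A i j * conj (ldui A C q (i, j)) +
        if i = j then 0 else C i j * conj (ldui A C q (j, i)) := by
  simp only [mul_apply, conjTranspose_apply, RCLike.star_def]
  split_ifs with hij
  · subst hij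
    rw [Fintype.sum_eq_single (i, i) fun r hr => by rw [ldui_apply_of_ne A C hr hr, zero_mul],
      add_zero, ldui_apply_self]
  · have hswap : ((i, j) : Fin d × Fin d) ≠ (j, i) := by simp [hij]
    rw [Fintype.sum_eq_add (i, j) (j, i) hswap
        fun r hr => by rw [ldui_apply_of_ne A C hr.1 hr.2, zero_mul],
      ldui_apply_self, ldui_apply_swap A C hij]

theorem ldui_mul_conjTranspose_eq_one_iff :
    ldui A C * (ldui A C)ᴴ = 1 ↔
      (∀ i, ‖A i i‖ = 1) ∧
        ∀ i j, i ≠ j → ‖A i j‖ ^ 2 + ‖C i j‖ ^ 2 = 1 ∧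
          A i j * conj (C j i) + C i j * conj (A j i) = 0 := by
  constructor
  · intro h
    have entry (p q) := congrFun (congrFun h p) q
    refine ⟨fun i => ?_, fun i j hij => ⟨?_, ?_⟩⟩
    · have hnorm := entry (i, i) (i, i)
      rw [ldui_mul_conjTranspose_apply, if_pos rfl, add_zero, ldui_apply_self,
        Complex.mul_conj', one_apply_eq] at hnorm
      exact (pow_eq_one_iff_of_nonneg (norm_nonneg _) two_ne_zero).mp (by exact_mod_cast hnorm)
    · have hnorm := entry (i, j) (i, j)
      rw [ldui_mul_conjTranspose_apply, if_neg hij, ldui_apply_self, ldui_apply_swap A C hij,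
        Complex.mul_conj', Complex.mul_conj', one_apply_eq] at hnorm
      exact_mod_cast hnorm
    · have horth := entry (i, j) (j, i)
      rwa [ldui_mul_conjTranspose_apply, if_neg hij, ldui_apply_self,
        ldui_apply_swap A C hij.symm, one_apply_ne (by simp [hij])] at horth
  · rintro ⟨hdiag, hoff⟩
    ext ⟨i, j⟩ ⟨k, l⟩
    rw [ldui_mul_conjTranspose_apply]
    by_cases hkl : (k, l) = (i, j)
    · obtain ⟨rfl, rfl⟩ := Prod.mk.inj hkl
      rw [one_apply_eq, ldui_apply_self, Complex.mul_conj']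
      split_ifs with hkl'
      · subst hkl'
        simp [hdiag]
      · rw [ldui_apply_swap A C hkl', Complex.mul_conj']
        exact_mod_cast (hoff k l hkl').1
    by_cases hlk : (k, l) = (j, i)
    · obtain ⟨rfl, rfl⟩ := Prod.mk.inj hlk
      have hlk' : l ≠ k := by simpa [eq_comm] using hkl
      rw [one_apply_ne (Ne.symm hkl), if_neg hlk', ldui_apply_swap A C hlk'.symm, ldui_apply_self]
      have horth := congrArg conj (hoff k l hlk'.symm).2
      simp only [map_add, map_mul, Complex.conj_conj, map_zero] at horth
      linear_combination horth
    · have hkl' : (l, k) ≠ (j, i) := by simpa [and_comm] using hkl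
      have hlk' : (l, k) ≠ (i, j) := by simpa [and_comm] using hlk
      rw [one_apply_ne (Ne.symm hkl), ldui_apply_of_ne A C (Ne.symm hkl) (Ne.symm hlk'),
        ldui_apply_of_ne A C (Ne.symm hlk) (Ne.symm hkl')]
      simp

end

theorem stmt_7_general {d : ℕ} (A C : Matrix (Fin d) (Fin d) ℂ) :
    X3 A (Matrix.diagonal fun i => A i i) C ∈ Matrix.unitaryGroup (Fin d × Fin d) ℂ ↔
      ((∀ i, ‖A i i‖ = 1) ∧
       (∀ i j : Fin d, i < j → ∃ ω : ℂ, ‖ω‖ = 1 ∧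
          A j i = ω * starRingEnd ℂ (A i j) ∧
          C j i = -(ω * starRingEnd ℂ (C i j))) ∧
       (∀ i j : Fin d, i < j →
          ‖A i j‖ ^ 2 + ‖C i j‖ ^ 2 = 1)) := by
  rw [mem_unitaryGroup_iff, star_eq_conjTranspose, ← ldui, ldui_mul_conjTranspose_eq_one_iff]
  refine and_congr Iff.rfl ⟨fun h => ?_, fun ⟨hphase, hnorm⟩ i j hij => ?_⟩
  · have hpair {i j : Fin d} (hij : i < j) :=
      rows_orthonormal_iff_exists_phase.1 ⟨h i j hij.ne, h j i hij.ne'⟩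
    exact ⟨fun i j hij => (hpair hij).2, fun i j hij => (hpair hij).1⟩
  · rcases hij.lt_or_gt with hij | hij
    · exact (rows_orthonormal_iff_exists_phase.2 ⟨hnorm i j hij, hphase i j hij⟩).1
    · exact (rows_orthonormal_iff_exists_phase.2 ⟨hnorm j i hij, hphase j i hij⟩).2

/-- unitarity characterization of LDUI matrices `X^{(1)}_{(A,C)}`
(the LDOI matrix with `B = diag(A)`). -/
theorem stmt_7 {d : ℕ} (A C : Matrix (Fin d) (Fin d) ℂ)
    (hdiag : ∀ i, A i i = C i i) :
    X3 A (Matrix.diagonal fun i => A i i) C ∈ Matrix.unitaryGroup (Fin d × Fin d) ℂ ↔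
      ((∀ i, ‖A i i‖ = 1) ∧
       (∀ i j : Fin d, i < j → ∃ ω : ℂ, ‖ω‖ = 1 ∧
          A j i = ω * starRingEnd ℂ (A i j) ∧
          C j i = -(ω * starRingEnd ℂ (C i j))) ∧
       (∀ i j : Fin d, i < j →
          ‖A i j‖ ^ 2 + ‖C i j‖ ^ 2 = 1)) :=
  stmt_7_general A C
end

section
/- A CLDUI matrix X parametrized by (A,B) (i.e. X = Σ_{i,j} A_{ij}|ij⟩⟨ij| + Σ_{i≠j} B_{ij}|ii⟩⟨jj|) is unitary if and only if B is unitary and |A_{ij}| = 1 for all i ≠ j. -/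
/-!
Listing the basis vectors `|ii⟩` first, `X = X3 A B (diagonal (diag A))` becomes block diagonal:
it acts as `B` on the span of the `|ii⟩` (this is where `diag A = diag B` enters) and as
multiplication by `A i j` on each `|ij⟩` with `i ≠ j`. A block diagonal matrix is unitary iff its
blocks are, and a diagonal matrix iff its entries have modulus one.
-/

open Matrix

theorem Complex.mem_unitary_iff_norm_eq_one {z : ℂ} : z ∈ unitary ℂ ↔ ‖z‖ = 1 := by
  rw [Unitary.mem_iff_star_mul_self, Complex.star_def, Complex.conj_mul']
  norm_cast
  exact pow_eq_one_iff_of_nonneg (norm_nonneg z) two_ne_zero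

namespace Matrix

variable {m n p α : Type*} [Fintype m] [Fintype n] [Fintype p] [DecidableEq m] [DecidableEq n]
  [DecidableEq p] [CommRing α] [StarRing α]

theorem submatrix_mem_unitaryGroup_iff (A : Matrix n n α) (e : m ≃ n) :
    A.submatrix e e ∈ unitaryGroup m α ↔ A ∈ unitaryGroup n α := by
  simp only [mem_unitaryGroup_iff, star_eq_conjTranspose, conjTranspose_submatrix,
    submatrix_mul_equiv, ← submatrix_one_equiv e]
  exact (reindex e.symm e.symm).injective.eq_iff (a := A * Aᴴ) (b := 1)

theorem diagonal_mem_unitaryGroup_iff (v : n → α) :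
    diagonal v ∈ unitaryGroup n α ↔ ∀ i, v i ∈ unitary α := by
  simp only [mem_unitaryGroup_iff', Unitary.mem_iff_star_mul_self, star_eq_conjTranspose,
    diagonal_conjTranspose, diagonal_mul_diagonal, ← diagonal_one, diagonal_eq_diagonal_iff,
    Pi.star_apply]

theorem fromBlocks_zero_zero_mem_unitaryGroup_iff (A : Matrix m m α) (D : Matrix p p α) :
    fromBlocks A 0 0 D ∈ unitaryGroup (m ⊕ p) α ↔
      A ∈ unitaryGroup m α ∧ D ∈ unitaryGroup p α := by
  simp only [mem_unitaryGroup_iff, star_eq_conjTranspose, fromBlocks_conjTranspose,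
    fromBlocks_multiply, ← fromBlocks_one, fromBlocks_inj]
  simp

end Matrix

def Equiv.sumOffDiag (n : Type*) [DecidableEq n] : n ⊕ {p : n × n // p.1 ≠ p.2} ≃ n × n where
  toFun := Sum.elim (fun i => (i, i)) Subtype.val
  invFun p := if h : p.1 = p.2 then .inl p.1 else .inr ⟨p, h⟩
  left_inv := by rintro (i | ⟨p, hp⟩) <;> simp [*]
  right_inv := by rintro ⟨i, j⟩; by_cases h : i = j <;> simp [h]

theorem X3_submatrix_sumOffDiag {d : ℕ} {R : Type*} [CommRing R]
    (A B : Matrix (Fin d) (Fin d) R) (hdiag : ∀ i, A i i = B i i) :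
    (X3 A B (diagonal fun i => A i i)).submatrix (Equiv.sumOffDiag _) (Equiv.sumOffDiag _) =
      fromBlocks B 0 0 (diagonal fun p => A p.1.1 p.1.2) := by
  ext (i | ⟨⟨i, j⟩, hij⟩) (k | ⟨⟨k, l⟩, hkl⟩) <;>
    simp only [X3, Equiv.sumOffDiag, diagonal_apply, submatrix_apply, of_apply, fromBlocks_apply₁₁,
      fromBlocks_apply₁₂, fromBlocks_apply₂₁, fromBlocks_apply₂₂, Equiv.coe_fn_mk, Sum.elim_inl,
      Sum.elim_inr, Matrix.zero_apply] <;>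
    grind

/-- unitarity characterization of CLDUI matrices `X^{(2)}_{(A,B)}`
(the LDOI matrix with `C = diag(A)`). -/
theorem stmt_8 {d : ℕ} (A B : Matrix (Fin d) (Fin d) ℂ)
    (hdiag : ∀ i, A i i = B i i) :
    X3 A B (Matrix.diagonal fun i => A i i) ∈ Matrix.unitaryGroup (Fin d × Fin d) ℂ ↔
      (B ∈ Matrix.unitaryGroup (Fin d) ℂ ∧
       ∀ i j : Fin d, i ≠ j → ‖A i j‖ = 1) := by
  rw [← submatrix_mem_unitaryGroup_iff _ (Equiv.sumOffDiag _), X3_submatrix_sumOffDiag A B hdiag,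
    fromBlocks_zero_zero_mem_unitaryGroup_iff, diagonal_mem_unitaryGroup_iff]
  simp only [Complex.mem_unitary_iff_norm_eq_one, Subtype.forall, Prod.forall]
end

section
/- An LDUI matrix X parametrized by (A,C) is dual unitary if and only if |C_{ij}| = 1 for all i, j and A = diag(C) (i.e. A is the diagonal matrix with entries C_{ii}, and A_{ij} = 0 for i ≠ j). -/
open Matrix

/-!
Every column of a unitary matrix is a unit vector. For `k ≠ l` the `(k,l)` column of `X^R` has
the single nonzero entry `C_lk`, the `(k,k)` column of `X` the single entry `A_kk = C_kk`, and the
`(k,l)` column of `X` the two entries `A_kl` and `C_lk`; so `|C_ij| = 1` everywhere and `A` is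
diagonal. Conversely, for `A = diag(C)` both `X` and `X^R` equal the swap permutation matrix scaled
row-wise by the phases `C_ij`, which is unitary.
-/

section Unitary

variable {n 𝕜 : Type*} [Fintype n] [DecidableEq n] [RCLike 𝕜]

theorem Matrix.sum_norm_sq_apply_eq_one_of_mem_unitaryGroup {U : Matrix n n 𝕜}
    (hU : U ∈ unitaryGroup n 𝕜) (j : n) : ∑ i, ‖U i j‖ ^ 2 = 1 := by
  have h := congr_fun₂ (mem_unitaryGroup_iff'.mp hU) j j
  simp only [mul_apply, star_apply, RCLike.star_def, RCLike.conj_mul, one_apply_eq] at h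
  exact_mod_cast h

theorem Matrix.of_ite_perm_mem_unitaryGroup (σ : Equiv.Perm n) {c : n → 𝕜}
    (hc : ∀ i, ‖c i‖ = 1) :
    (of fun i j => if j = σ i then c i else 0) ∈ unitaryGroup n 𝕜 := by
  rw [mem_unitaryGroup_iff]
  ext i j
  simp only [mul_apply, star_apply, of_apply, apply_ite star, star_zero, ite_mul, zero_mul,
    mul_ite, mul_zero, Finset.sum_ite_eq', Finset.mem_univ, if_true, σ.injective.eq_iff]
  rcases eq_or_ne i j with rfl | hij
  · simp [RCLike.star_def, RCLike.mul_conj, hc]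
  · simp [hij, hij.symm]

end Unitary

section NormSum

variable {ι E : Type*} [Fintype ι] [DecidableEq ι] [SeminormedAddCommGroup E]

theorem sum_norm_sq_ite_eq (a : ι) (x : E) :
    ∑ p, ‖if p = a then x else 0‖ ^ 2 = ‖x‖ ^ 2 := by
  simp [apply_ite]

theorem sum_norm_sq_ite_add_ite_eq {a b : ι} (hab : a ≠ b) (x y : E) :
    ∑ p, ‖(if p = a then x else 0) + (if p = b then y else 0)‖ ^ 2 = ‖x‖ ^ 2 + ‖y‖ ^ 2 := by
  rw [Fintype.sum_eq_add a b hab fun p hp => by simp [hp.1, hp.2]]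
  simp [hab, hab.symm]

end NormSum

section LDUI

variable {d : ℕ} {R : Type*} [CommRing R] (A C : Matrix (Fin d) (Fin d) R)

theorem X3_diagonal_apply_of_ne {k l : Fin d} (hkl : k ≠ l) (p : Fin d × Fin d) :
    X3 A (diagonal fun i => A i i) C p (k, l) =
      (if p = (k, l) then A k l else 0) + (if p = (l, k) then C l k else 0) := by
  obtain ⟨i, j⟩ := p
  simp only [X3, of_apply, diagonal_apply, Prod.ext_iff]
  split_ifs <;> grind

theorem X3_diagonal_apply_diag (k : Fin d) (p : Fin d × Fin d) :
    X3 A (diagonal fun i => A i i) C p (k, k) = if p = (k, k) then A k k else 0 := by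
  obtain ⟨i, j⟩ := p
  simp only [X3, of_apply, diagonal_apply, Prod.ext_iff]
  split_ifs <;> grind

theorem realign_X3_diagonal_apply_of_ne {k l : Fin d} (hkl : k ≠ l) (p : Fin d × Fin d) :
    realign (X3 A (diagonal fun i => A i i) C) p (k, l) = if p = (l, k) then C l k else 0 := by
  simp only [realign, X3, of_apply, diagonal_apply, Prod.ext_iff]
  split_ifs <;> grind

theorem X3_diagonal_diagonal (C : Matrix (Fin d) (Fin d) R) :
    X3 (diagonal fun i => C i i) (diagonal fun i => diagonal (fun i => C i i) i i) C =
      of fun p q => if q = Equiv.prodComm _ _ p then C p.1 p.2 else 0 := by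
  ext ⟨i, j⟩ ⟨k, l⟩
  simp only [X3, of_apply, diagonal_apply, Equiv.prodComm_apply, Prod.swap, Prod.ext_iff]
  split_ifs <;> grind

theorem realign_of_ite_prodComm (c : Fin d × Fin d → R) :
    realign (of fun p q => if q = Equiv.prodComm _ _ p then c p else 0) =
      of fun p q => if q = Equiv.prodComm _ _ p then c p else 0 := by
  ext ⟨i, j⟩ ⟨k, l⟩
  simp only [realign, of_apply, Equiv.prodComm_apply, Prod.swap, Prod.ext_iff]
  split_ifs <;> grind

end LDUI

/-- dual-unitarity characterization of LDUI matrices. -/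
theorem stmt_10 {d : ℕ} (A C : Matrix (Fin d) (Fin d) ℂ)
    (hdiag : ∀ i, A i i = C i i) :
    (X3 A (Matrix.diagonal fun i => A i i) C ∈ Matrix.unitaryGroup (Fin d × Fin d) ℂ ∧
     realign (X3 A (Matrix.diagonal fun i => A i i) C) ∈
       Matrix.unitaryGroup (Fin d × Fin d) ℂ) ↔
      ((∀ i j, ‖C i j‖ = 1) ∧
       A = Matrix.diagonal fun i => C i i) := by
  constructor
  · rintro ⟨hX, hR⟩
    have hC_off : ∀ k l, k ≠ l → ‖C l k‖ = 1 := fun k l hkl => by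
      have h := sum_norm_sq_apply_eq_one_of_mem_unitaryGroup hR (k, l)
      simp only [realign_X3_diagonal_apply_of_ne A C hkl, sum_norm_sq_ite_eq] at h
      exact (pow_eq_one_iff_of_nonneg (norm_nonneg _) two_ne_zero).mp h
    have hA_diag : ∀ k, ‖A k k‖ = 1 := fun k => by
      have h := sum_norm_sq_apply_eq_one_of_mem_unitaryGroup hX (k, k)
      simp only [X3_diagonal_apply_diag, sum_norm_sq_ite_eq] at h
      exact (pow_eq_one_iff_of_nonneg (norm_nonneg _) two_ne_zero).mp h
    have hA_off : ∀ k l, k ≠ l → A k l = 0 := fun k l hkl => by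
      have h := sum_norm_sq_apply_eq_one_of_mem_unitaryGroup hX (k, l)
      simp only [X3_diagonal_apply_of_ne A C hkl] at h
      rw [sum_norm_sq_ite_add_ite_eq (by simp [hkl]), hC_off k l hkl] at h
      simpa using h
    refine ⟨fun i j => ?_, ?_⟩
    · rcases eq_or_ne i j with rfl | hij
      · rw [← hdiag]; exact hA_diag i
      · exact hC_off j i hij.symm
    · ext i j
      rcases eq_or_ne i j with rfl | hij
      · simp [hdiag]
      · simp [hij, hA_off i j hij]
  · rintro ⟨hC, rfl⟩
    have hU := of_ite_perm_mem_unitaryGroup (Equiv.prodComm (Fin d) (Fin d))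
      (c := fun p => C p.1 p.2) fun p => hC p.1 p.2
    rw [X3_diagonal_diagonal, realign_of_ite_prodComm]
    exact ⟨hU, hU⟩
end

section
/- For d ≥ 3, there exist no dual unitary CLDUI matrices; that is, no matrix of the form X = Σ_{i,j} A_{ij}|ij⟩⟨ij| + Σ_{i≠j} B_{ij}|ii⟩⟨jj| (with diag(A)=diag(B)) such that both X and its realignment X^R are unitary. -/
open Matrix

lemma realign_entry {d : ℕ} (A B : Matrix (Fin d) (Fin d) ℂ) {i j : Fin d} (hij : i ≠ j)
    (q : Fin d × Fin d) :
    realign (X3 A B (Matrix.diagonal fun i => A i i)) (i, j) q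
      = if q = (i, j) then B i j else 0 := by
  obtain ⟨k, l⟩ := q
  simp only [realign, X3, Matrix.of_apply, Matrix.diagonal_apply, Prod.mk.injEq]
  split_ifs <;> first | tauto | simp

lemma col_entry {d : ℕ} (A B : Matrix (Fin d) (Fin d) ℂ) (hdiag : ∀ i, A i i = B i i)
    (z : Fin d) (p : Fin d × Fin d) :
    X3 A B (Matrix.diagonal fun i => A i i) p (z, z)
      = if p.1 = p.2 then B p.1 z else 0 := by
  obtain ⟨k, l⟩ := p
  simp only [X3, Matrix.of_apply, Matrix.diagonal_apply]
  split_ifs <;> first | tauto | simp_all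

/-- for `d ≥ 3` there are no dual unitary CLDUI matrices. -/
theorem stmt_11 {d : ℕ} (hd : 3 ≤ d) :
    ¬ ∃ A B : Matrix (Fin d) (Fin d) ℂ,
        (∀ i, A i i = B i i) ∧
        X3 A B (Matrix.diagonal fun i => A i i) ∈
          Matrix.unitaryGroup (Fin d × Fin d) ℂ ∧
        realign (X3 A B (Matrix.diagonal fun i => A i i)) ∈
          Matrix.unitaryGroup (Fin d × Fin d) ℂ := by
  rintro ⟨A, B, hdiag, hX, hXR⟩
  set z : Fin d := ⟨0, by omega⟩ with hz
  set i1 : Fin d := ⟨1, by omega⟩ with hi1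
  set i2 : Fin d := ⟨2, by omega⟩ with hi2
  have hBmod : ∀ i j : Fin d, i ≠ j → Complex.normSq (B i j) = 1 := by
    intro i j hij
    have h1 := Matrix.mem_unitaryGroup_iff.mp hXR
    have h2 : (realign (X3 A B (Matrix.diagonal fun i => A i i)) *
        star (realign (X3 A B (Matrix.diagonal fun i => A i i)))) (i, j) (i, j)
        = (1 : Matrix (Fin d × Fin d) (Fin d × Fin d) ℂ) (i, j) (i, j) := by rw [h1]
    rw [Matrix.mul_apply, Matrix.one_apply_eq] at h2
    simp only [Matrix.star_apply, realign_entry A B hij] at h2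
    rw [Finset.sum_eq_single (i, j)] at h2
    · simp only [if_pos rfl] at h2
      rw [Complex.star_def, Complex.mul_conj] at h2
      exact_mod_cast h2
    · intro b _ hb; simp [hb]
    · simp
  have h1 := Matrix.mem_unitaryGroup_iff'.mp hX
  have h2 : (star (X3 A B (Matrix.diagonal fun i => A i i)) *
      X3 A B (Matrix.diagonal fun i => A i i)) (z, z) (z, z)
      = (1 : Matrix (Fin d × Fin d) (Fin d × Fin d) ℂ) (z, z) (z, z) := by rw [h1]
  rw [Matrix.mul_apply, Matrix.one_apply_eq] at h2
  simp only [Matrix.star_apply, col_entry A B hdiag z] at h2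
  have h3 : ∑ x : Fin d, (Complex.normSq (B x z) : ℂ) = 1 := by
    rw [← h2, Fintype.sum_prod_type]
    apply Finset.sum_congr rfl
    intro x _
    rw [Finset.sum_eq_single x]
    · simp [Complex.star_def, Complex.mul_conj, mul_comm]
    · intro b _ hb; simp [Ne.symm hb]
    · simp
  have h4 : ∑ x : Fin d, Complex.normSq (B x z) = 1 := by exact_mod_cast h3
  have hne : i1 ≠ i2 := by simp [hi1, hi2, Fin.ext_iff]
  have hsub : ∑ x ∈ ({i1, i2} : Finset (Fin d)), Complex.normSq (B x z)
      ≤ ∑ x : Fin d, Complex.normSq (B x z) :=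
    Finset.sum_le_sum_of_subset_of_nonneg (Finset.subset_univ _)
      (fun i _ _ => Complex.normSq_nonneg _)
  rw [Finset.sum_pair hne, hBmod i1 z (by simp [hi1, hz, Fin.ext_iff]),
    hBmod i2 z (by simp [hi2, hz, Fin.ext_iff]), h4] at hsub
  linarith
end

section
/- For d ≥ 3, the product unitary LDOI matrices, i.e. the LDOI matrices X parametrized by (A,B,C) that are of the form X = Y⊗Z with Y, Z unitary, are exactly the matrices Y⊗Z with Y, Z diagonal unitary matrices. -/
open Matrix

open Kronecker

set_option maxHeartbeats 1000000

/- ----------------- auxiliary lemmas ----------------- -/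

lemma col_mem_range {n m : Type*} [Fintype n] [Fintype m] [DecidableEq m]
    (M : Matrix n m ℂ) (q : m) : (fun p => M p q) ∈ LinearMap.range M.mulVecLin := by
  refine ⟨Pi.single q 1, ?_⟩
  ext p
  simp [mulVecLin, mulVec, dotProduct, Pi.single_apply]

lemma exists_uv {n m : Type*} [Fintype n] [Fintype m] [DecidableEq m]
    (M : Matrix n m ℂ) (h : M.rank = 1) :
    ∃ u : n → ℂ, ∃ v : m → ℂ, ∀ p q, M p q = u p * v q := by
  rw [Matrix.rank] at h
  obtain ⟨w, hw0, hw⟩ := finrank_eq_one_iff'.mp h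
  refine ⟨fun p => (w : (n → ℂ)) p, fun q => (hw ⟨_, col_mem_range M q⟩).choose, fun p q => ?_⟩
  have := (hw ⟨_, col_mem_range M q⟩).choose_spec
  have := congrFun (congrArg Subtype.val this) p
  simp at this
  rw [← this]; ring

lemma rank_le_one_of_uv {n m : Type*} [Fintype n] [Fintype m] [DecidableEq m]
    (M : Matrix n m ℂ) (u : n → ℂ) (v : m → ℂ) (huv : ∀ p q, M p q = u p * v q) :
    M.rank ≤ 1 := by
  rw [Matrix.rank]
  have hle : LinearMap.range M.mulVecLin ≤ Submodule.span ℂ {u} := by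
    rintro x ⟨c, rfl⟩
    have : M.mulVecLin c = (∑ q, v q * c q) • u := by
      ext p
      simp [mulVecLin, mulVec, dotProduct, huv, Finset.sum_mul, Finset.mul_sum]
      congr 1; ext q; ring
    rw [this]
    exact Submodule.smul_mem _ _ (Submodule.mem_span_singleton_self u)
  calc Module.finrank ℂ (LinearMap.range M.mulVecLin)
      ≤ Module.finrank ℂ (Submodule.span ℂ {u}) := Submodule.finrank_mono hle
    _ ≤ 1 := by
        by_cases hu : u = 0
        · subst hu
          rw [Submodule.span_zero_singleton]
          simp
        · rw [finrank_span_singleton hu]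

lemma rank_pos_of_ne {n m : Type*} [Fintype n] [Fintype m] [DecidableEq m]
    (M : Matrix n m ℂ) (p : n) (q : m) (hpq : M p q ≠ 0) : M.rank ≠ 0 := by
  intro h0
  rw [Matrix.rank, Submodule.finrank_eq_zero] at h0
  have := col_mem_range M q
  rw [h0] at this
  exact hpq (congrFun this p)

lemma X3_apply {d : ℕ} (A B C : Matrix (Fin d) (Fin d) ℂ) (a b i j : Fin d) :
    X3 A B C (a, b) (i, j) =
      (if a = i ∧ b = j then A a b else 0) +
      (if a = b ∧ i = j ∧ a ≠ i then B a i else 0) +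
      (if a = j ∧ b = i ∧ a ≠ b then C a b else 0) := rfl

lemma RX3_apply {d : ℕ} (A B C : Matrix (Fin d) (Fin d) ℂ) (i j k l : Fin d) :
    realign (X3 A B C) (i, j) (k, l) =
      (if i = j ∧ k = l then A i k else 0) +
      (if i = k ∧ j = l ∧ i ≠ j then B i j else 0) +
      (if i = l ∧ k = j ∧ i ≠ k then C i k else 0) := rfl

lemma exists_third {d : ℕ} (hd : 3 ≤ d) (i j : Fin d) : ∃ m : Fin d, m ≠ i ∧ m ≠ j := by
  by_contra hcon
  push_neg at hcon
  have hsub : (Finset.univ : Finset (Fin d)) ⊆ {i, j} := by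
    intro m _
    by_cases hmi : m = i
    · simp [hmi]
    · simp [hcon m hmi]
  have := Finset.card_le_card hsub
  have h2 : ({i, j} : Finset (Fin d)).card ≤ 2 :=
    (Finset.card_insert_le _ _).trans (by simp)
  simp [Finset.card_univ] at this
  omega

lemma abs_one_of_conj_mul {z : ℂ} (h : (starRingEnd ℂ) z * z = 1) : ‖z‖ = 1 := by
  have h2 : (Complex.normSq z : ℂ) = 1 := by rw [Complex.normSq_eq_conj_mul_self]; exact h
  have h3 : Complex.normSq z = 1 := by exact_mod_cast h2
  rw [Complex.norm_def, h3, Real.sqrt_one]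

/-- for `d ≥ 3`, a unitary LDOI matrix has operator Schmidt rank one
iff it is a tensor product of diagonal unitary matrices. -/
theorem stmt_16 {d : ℕ} (hd : 3 ≤ d) (A B C : Matrix (Fin d) (Fin d) ℂ)
    (h : EqDiag A B C)
    (hU : X3 A B C ∈ Matrix.unitaryGroup (Fin d × Fin d) ℂ) :
    (realign (X3 A B C)).rank = 1 ↔
      ∃ y z : Fin d → ℂ,
        (∀ i, ‖y i‖ = 1) ∧ (∀ i, ‖z i‖ = 1) ∧
        X3 A B C = Matrix.diagonal y ⊗ₖ Matrix.diagonal z := by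
  have i0 : Fin d := ⟨0, by omega⟩
  have hU' : star (X3 A B C) * (X3 A B C) = 1 := Matrix.mem_unitaryGroup_iff'.mp hU
  -- column norm identities from unitarity
  have col1 : ∀ i j : Fin d, i ≠ j →
      (starRingEnd ℂ) (A i j) * A i j + (starRingEnd ℂ) (C j i) * C j i = 1 := by
    intro i j hij
    have e : (star (X3 A B C) * X3 A B C) (i, j) (i, j) = 1 := by
      rw [hU']; simp [Matrix.one_apply]
    rw [Matrix.mul_apply] at e
    simp only [Matrix.star_apply] at e
    rw [Finset.sum_eq_add ((i, j) : Fin d × Fin d) ((j, i) : Fin d × Fin d)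
      (fun h' => hij (congrArg Prod.fst h'))
      (by
        rintro ⟨a, b⟩ _ ⟨hc1, hc2⟩
        have hz : X3 A B C (a, b) (i, j) = 0 := by
          have hc1' : ¬(a = i ∧ b = j) := fun hab => hc1 (by rw [hab.1, hab.2])
          have hc2' : ¬(a = j ∧ b = i ∧ a ≠ b) := fun hab => hc2 (by rw [hab.1, hab.2.1])
          rw [X3_apply, if_neg hc1', if_neg (fun hh => hij hh.2.1), if_neg hc2']
          norm_num
        rw [hz]; ring)
      (fun h' => absurd (Finset.mem_univ _) h') (fun h' => absurd (Finset.mem_univ _) h')] at e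
    have e1 : X3 A B C (i, j) (i, j) = A i j := by
      rw [X3_apply]; simp [hij]
    have e2 : X3 A B C (j, i) (i, j) = C j i := by
      rw [X3_apply]; simp [hij, Ne.symm hij]
    rw [e1, e2] at e
    simpa using e
  have col2 : ∀ k : Fin d,
      (∑ a : Fin d, (starRingEnd ℂ) (if a = k then A k k else B a k) *
        (if a = k then A k k else B a k)) = 1 := by
    intro k
    have e : (star (X3 A B C) * X3 A B C) (k, k) (k, k) = 1 := by
      rw [hU']; simp [Matrix.one_apply]
    rw [Matrix.mul_apply] at e
    simp only [Matrix.star_apply, Complex.star_def] at e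
    rw [Fintype.sum_prod_type] at e
    have inner : ∀ a : Fin d,
        (∑ b : Fin d, (starRingEnd ℂ) (X3 A B C (a, b) (k, k)) * X3 A B C (a, b) (k, k)) =
        (starRingEnd ℂ) (if a = k then A k k else B a k) * (if a = k then A k k else B a k) := by
      intro a
      rw [Finset.sum_eq_single_of_mem a (Finset.mem_univ a)
        (by
          intro b _ hba
          have hz : X3 A B C (a, b) (k, k) = 0 := by
            rw [X3_apply]
            split_ifs with h1 h2 h3 <;> simp_all
          rw [hz]; ring)]
      have hv : X3 A B C (a, a) (k, k) = (if a = k then A k k else B a k) := by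
        rw [X3_apply]
        by_cases hak : a = k
        · subst hak; simp
        · simp [hak]
      rw [hv]
    rw [← e]
    exact Finset.sum_congr rfl (fun a _ => (inner a).symm)
  constructor
  · -- forward direction
    intro hrank
    obtain ⟨u, v, hR⟩ := exists_uv _ hrank
    have hA : ∀ i k : Fin d, A i k = u (i, i) * v (k, k) := by
      intro i k
      have := hR ((i, i)) ((k, k))
      rw [RX3_apply, if_pos ⟨rfl, rfl⟩, if_neg (fun hc => hc.2.2 rfl),
        if_neg (fun hc => hc.2.2 hc.1)] at this
      simpa using this
    have hB : ∀ i j : Fin d, i ≠ j → B i j = u (i, j) * v (i, j) := by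
      intro i j hij
      have := hR ((i, j)) ((i, j))
      rw [RX3_apply] at this
      simpa [hij] using this
    have hC : ∀ i j : Fin d, i ≠ j → C i j = u (i, j) * v (j, i) := by
      intro i j hij
      have := hR ((i, j)) ((j, i))
      rw [RX3_apply] at this
      simpa [hij] using this
    -- all off-diagonal C vanish
    have hC0 : ∀ i j : Fin d, i ≠ j → C i j = 0 := by
      intro i j hij
      by_contra hCne
      have hune : u (i, j) ≠ 0 := by
        intro hu; rw [hC i j hij, hu, zero_mul] at hCne; exact hCne rfl
      obtain ⟨m, hmi, hmj⟩ := exists_third hd i j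
      have hv0 : ∀ a : Fin d, v (a, m) = 0 := by
        intro a
        have := hR ((i, j)) ((a, m))
        rw [RX3_apply] at this
        have hz : ((if i = j ∧ a = m then A i a else 0) +
            (if i = a ∧ j = m ∧ i ≠ j then B i j else 0) +
            (if i = m ∧ a = j ∧ i ≠ a then C i a else 0)) = 0 := by
          simp [hij, Ne.symm hmj, Ne.symm hmi]
        rw [hz] at this
        exact (mul_eq_zero.mp this.symm).resolve_left hune
      have hcol := col2 m
      have hall : ∀ a : Fin d, (if a = m then A m m else B a m) = 0 := by
        intro a
        by_cases ham : a = m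
        · subst ham
          rw [if_pos rfl, hA a a, hv0 a, mul_zero]
        · rw [if_neg ham, hB a m ham, hv0 a, mul_zero]
      rw [Finset.sum_eq_zero (fun a _ => by rw [hall a, map_zero, zero_mul])] at hcol
      simp at hcol
    -- off-diagonal A entries are unimodular
    have hAoff : ∀ i j : Fin d, i ≠ j → (starRingEnd ℂ) (A i j) * A i j = 1 := by
      intro i j hij
      have := col1 i j hij
      rw [hC0 j i (Ne.symm hij)] at this
      simpa using this
    have hu0 : ∀ i : Fin d, u (i, i) ≠ 0 := by
      intro i
      obtain ⟨m, hmi, _⟩ := exists_third hd i i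
      have hAne : A i m ≠ 0 := by
        intro h0
        have := hAoff i m (Ne.symm hmi)
        rw [h0] at this; simp at this
      rw [hA i m] at hAne
      exact fun hu => hAne (by rw [hu, zero_mul])
    have hv0 : ∀ j : Fin d, v (j, j) ≠ 0 := by
      intro j
      obtain ⟨m, hmj, _⟩ := exists_third hd j j
      have hAne : A m j ≠ 0 := by
        intro h0
        have := hAoff m j hmj
        rw [h0] at this; simp at this
      rw [hA m j] at hAne
      exact fun hv => hAne (by rw [hv, mul_zero])
    have hvoff : ∀ k l : Fin d, k ≠ l → v (k, l) = 0 := by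
      intro k l hkl
      have := hR ((k, k)) ((k, l))
      rw [RX3_apply] at this
      have hz : ((if k = k ∧ k = l then A k k else 0) +
          (if k = k ∧ k = l ∧ k ≠ k then B k k else 0) +
          (if k = l ∧ k = k ∧ k ≠ k then C k k else 0)) = 0 := by
        simp [hkl]
      rw [hz] at this
      exact (mul_eq_zero.mp this.symm).resolve_left (hu0 k)
    have hBoff : ∀ i j : Fin d, i ≠ j → B i j = 0 := by
      intro i j hij
      rw [hB i j hij, hvoff i j hij, mul_zero]
    have hAdiag : ∀ k : Fin d, (starRingEnd ℂ) (A k k) * A k k = 1 := by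
      intro k
      have hcol := col2 k
      rw [Finset.sum_eq_single_of_mem k (Finset.mem_univ k)
        (by
          intro a _ hak
          rw [if_neg hak, hBoff a k hak]
          ring)] at hcol
      simpa using hcol
    have hAabs : ∀ i j : Fin d, ‖A i j‖ = 1 := by
      intro i j
      by_cases hij : i = j
      · subst hij; exact abs_one_of_conj_mul (hAdiag i)
      · exact abs_one_of_conj_mul (hAoff i j hij)
    have hA00 : A i0 i0 ≠ 0 := by
      intro h0
      have := hAabs i0 i0
      rw [h0] at this; simp at this
    refine ⟨fun i => A i i0, fun j => A i0 j * (A i0 i0)⁻¹, fun i => hAabs i i0, ?_, ?_⟩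
    · intro j
      rw [norm_mul, norm_inv, hAabs, hAabs]
      norm_num
    · have hyz : ∀ i k : Fin d, A i i0 * (A i0 k * (A i0 i0)⁻¹) = A i k := by
        intro i k
        have h1 := hu0 i0
        have h2 := hv0 i0
        rw [hA i i0, hA i0 k, hA i0 i0, hA i k]
        field_simp
      ext ⟨i, k⟩ ⟨j, l⟩
      rw [X3_apply]
      have h2 : (if i = k ∧ j = l ∧ i ≠ j then B i j else 0) = 0 := by
        split_ifs with hh
        · exact hBoff i j hh.2.2
        · rfl
      have h3 : (if i = l ∧ k = j ∧ i ≠ k then C i k else 0) = 0 := by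
        split_ifs with hh
        · exact hC0 i k hh.2.2
        · rfl
      rw [h2, h3, add_zero, add_zero]
      rw [Matrix.kroneckerMap_apply]
      by_cases hij : i = j <;> by_cases hkl : k = l <;>
        simp [Matrix.diagonal_apply, hij, hkl, hyz]
  · -- reverse direction
    rintro ⟨y, z, hy, hz, hX⟩
    have key : ∀ p q : Fin d × Fin d, realign (X3 A B C) p q =
        (fun p : Fin d × Fin d => if p.1 = p.2 then y p.1 else 0) p *
        (fun q : Fin d × Fin d => if q.1 = q.2 then z q.1 else 0) q := by
      rintro ⟨i, j⟩ ⟨k, l⟩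
      show X3 A B C (i, k) (j, l) = _
      rw [hX, Matrix.kroneckerMap_apply]
      by_cases hij : i = j <;> by_cases hkl : k = l <;>
        simp [Matrix.diagonal_apply, hij, hkl]
    have hle := rank_le_one_of_uv _ _ _ key
    have hne : realign (X3 A B C) (i0, i0) (i0, i0) ≠ 0 := by
      have hval : realign (X3 A B C) (i0, i0) (i0, i0) = y i0 * z i0 := by
        rw [key]; simp
      rw [hval]
      refine mul_ne_zero (fun h' => ?_) (fun h' => ?_)
      · have := hy i0; rw [h'] at this; simp at this
      · have := hz i0; rw [h'] at this; simp at this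
    have := rank_pos_of_ne _ _ _ hne
    omega
end

section
/- Let X be an LDUI dual unitary matrix parametrized by (A,C) with |C_{ij}| = 1 for all i,j and A = diag(C). Then Tr[(CC†)²] ≥ d³ with equality iff C is a complex Hadamard matrix, and consequently the entangling power e_p(X) = E(XS)/E(S) satisfies e_p(X) ≤ d/(d+1), with equality if and only if C is a complex Hadamard matrix. -/
open Matrix

/-!
Partial transposition turns `X^{(3)}_{(diag C, diag C, C)}` into `Σ_{i,k} C_{ik} |ii⟩⟨kk|`, so
`Tr[(X^Γ X^Γ†)²] = Tr[(CC†)²]`. Since `C` is unimodular, every diagonal entry of the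
Hermitian matrix `M = CC†` equals `d`; writing `M = d·1 + N` gives `Tr M² = d³ + Tr(NN†)` with
`Tr(NN†) ≥ 0`, vanishing iff `N = 0`, i.e. iff `C` is a complex Hadamard matrix. The bound on
`e_p` then follows from `e_p = d/(d+1) - (Tr M² - d³)/(d²(d²-1))`.
-/

open scoped ComplexOrder

section DiagEmbed

variable {d : ℕ} {R : Type*}

/-- `diagEmbed M = Σ_{i,k} M_{ik} |ii⟩⟨kk|`. -/
def diagEmbed [Zero R] (M : Matrix (Fin d) (Fin d) R) :
    Matrix (Fin d × Fin d) (Fin d × Fin d) R :=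
  Matrix.of fun p q => if p.1 = p.2 ∧ q.1 = q.2 then M p.1 q.1 else 0

lemma diagEmbed_mul [NonUnitalNonAssocSemiring R] (M N : Matrix (Fin d) (Fin d) R) :
    diagEmbed M * diagEmbed N = diagEmbed (M * N) := by
  ext ⟨i, j⟩ ⟨k, l⟩
  simp only [diagEmbed, mul_apply, of_apply, Fintype.sum_prod_type]
  by_cases hij : i = j <;> by_cases hkl : k = l <;> simp [hij, hkl]

lemma conjTranspose_diagEmbed [AddMonoid R] [StarAddMonoid R] (M : Matrix (Fin d) (Fin d) R) :
    (diagEmbed M)ᴴ = diagEmbed Mᴴ := by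
  ext ⟨i, j⟩ ⟨k, l⟩
  by_cases hij : i = j <;> by_cases hkl : k = l <;> simp [diagEmbed, hij, hkl]

lemma trace_diagEmbed [AddCommMonoid R] (M : Matrix (Fin d) (Fin d) R) :
    (diagEmbed M).trace = M.trace := by
  simp [trace, diagEmbed, Fintype.sum_prod_type]

lemma ptrans_X3_diagonal [CommRing R] (C : Matrix (Fin d) (Fin d) R) :
    ptrans (X3 (diagonal fun i => C i i) (diagonal fun i => C i i) C) = diagEmbed C := by
  ext ⟨i, j⟩ ⟨k, l⟩
  simp only [ptrans, X3, diagEmbed, of_apply, diagonal_apply]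
  by_cases hij : i = j <;> by_cases hkl : k = l <;> by_cases hik : i = k <;> subst_vars <;>
    simp_all [eq_comm]

end DiagEmbed

lemma trace_mul_conjTranspose_of_diag_eq {n R : Type*} [Fintype n] [DecidableEq n]
    [CommRing R] [StarRing R] {M : Matrix n n R} {c : R} (hM : ∀ i, M i i = c) :
    (M * Mᴴ).trace =
      ((M - c • 1) * (M - c • 1)ᴴ).trace + Fintype.card n * (c * star c) := by
  set N := M - c • 1 with hN
  have hNtr : N.trace = 0 := by simp [hN, trace, hM]
  rw [show M = N + c • 1 by simp [hN]]
  simp only [conjTranspose_add, conjTranspose_smul, conjTranspose_one, add_mul, mul_add,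
    Matrix.smul_mul, Matrix.mul_smul, mul_one, one_mul, trace_add, trace_smul, trace_one,
    trace_conjTranspose, hNtr, star_zero, smul_eq_mul]
  ring

lemma re_trace_mul_conjTranspose_self_nonneg {n : Type*} [Fintype n] (N : Matrix n n ℂ) :
    0 ≤ (N * Nᴴ).trace.re :=
  (Complex.nonneg_iff.mp (posSemidef_self_mul_conjTranspose N).trace_nonneg).1

lemma re_trace_mul_conjTranspose_self_eq_zero_iff {n : Type*} [Fintype n] {N : Matrix n n ℂ} :
    (N * Nᴴ).trace.re = 0 ↔ N = 0 := by
  have him : (N * Nᴴ).trace.im = 0 :=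
    ((Complex.nonneg_iff.mp (posSemidef_self_mul_conjTranspose N).trace_nonneg).2).symm
  rw [← trace_mul_conjTranspose_self_eq_zero_iff, Complex.ext_iff, him]
  simp

lemma mul_conjTranspose_apply_self_of_norm_eq_one {n m 𝕜 : Type*} [Fintype m] [RCLike 𝕜]
    {C : Matrix n m 𝕜} (hC : ∀ i j, ‖C i j‖ = 1) (i : n) :
    (C * Cᴴ) i i = Fintype.card m := by
  simp [mul_apply, RCLike.mul_conj, hC]

lemma entanglingPower_eq {x T : ℝ} (hx : 1 < x) :
    (1 - T / x ^ 4) / (1 - 1 / x ^ 2) = x / (x + 1) - (T - x ^ 3) / (x ^ 2 * (x ^ 2 - 1)) := by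
  have : x ^ 2 - 1 ≠ 0 := by nlinarith
  have : x + 1 ≠ 0 := by linarith
  have : x ≠ 0 := by linarith
  field_simp
  ring

/-- maximum entangling power of LDUI dual unitary matrices.
For a dual unitary LDUI matrix (parametrized by `C` with unimodular entries and
`A = diag(C)`), `Tr[(CC†)²] ≥ d³` with equality iff `C` is a complex Hadamard matrix,
and the entangling power `e_p(X) = E(XS)/E(S)` is at most `d/(d+1)`, with equality
iff `C` is a complex Hadamard matrix. -/
theorem stmt_18 {d : ℕ} (hd : 2 ≤ d) (C : Matrix (Fin d) (Fin d) ℂ)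
    (hC : ∀ i j, ‖C i j‖ = 1)
    (A : Matrix (Fin d) (Fin d) ℂ) (hA : A = Matrix.diagonal fun i => C i i)
    (XG : Matrix (Fin d × Fin d) (Fin d × Fin d) ℂ)
    (hXG : XG = ptrans (X3 A A C))
    (ep : ℝ)
    (hep : ep = (1 - (Matrix.trace ((XG * XGᴴ) * (XG * XGᴴ))).re / (d : ℝ) ^ 4) /
                (1 - 1 / (d : ℝ) ^ 2)) :
    (d : ℝ) ^ 3 ≤ (Matrix.trace ((C * Cᴴ) * (C * Cᴴ))).re ∧
    ((Matrix.trace ((C * Cᴴ) * (C * Cᴴ))).re = (d : ℝ) ^ 3 ↔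
      C * Cᴴ = (d : ℂ) • (1 : Matrix (Fin d) (Fin d) ℂ)) ∧
    ep ≤ (d : ℝ) / (d + 1) ∧
    (ep = (d : ℝ) / (d + 1) ↔
      C * Cᴴ = (d : ℂ) • (1 : Matrix (Fin d) (Fin d) ℂ)) := by
  subst hA hXG hep
  set M := C * Cᴴ
  have hdiag : ∀ i, M i i = ((d : ℝ) : ℂ) := by
    simpa using mul_conjTranspose_apply_self_of_norm_eq_one hC
  set D := ((M - ((d : ℝ) : ℂ) • 1) * (M - ((d : ℝ) : ℂ) • 1)ᴴ).trace.re
  have hD0 : 0 ≤ D := re_trace_mul_conjTranspose_self_nonneg _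
  have hD : D = 0 ↔ M = (d : ℂ) • 1 := by
    rw [re_trace_mul_conjTranspose_self_eq_zero_iff, sub_eq_zero, Complex.ofReal_natCast]
  have hT : (M * M).trace.re = d ^ 3 + D := by
    have hMH : Mᴴ = M := (isHermitian_mul_conjTranspose_self C).eq
    rw [show M * M = M * Mᴴ by rw [hMH], trace_mul_conjTranspose_of_diag_eq hdiag,
      Complex.add_re, add_comm, add_left_inj]
    simp [pow_succ, mul_assoc]
  have hd1 : (1 : ℝ) < d := by exact_mod_cast hd
  have hden : 0 < (d : ℝ) ^ 2 * ((d : ℝ) ^ 2 - 1) := mul_pos (by positivity) (by nlinarith)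
  rw [ptrans_X3_diagonal, conjTranspose_diagEmbed, diagEmbed_mul, diagEmbed_mul,
    trace_diagEmbed, hT,     entanglingPower_eq hd1, add_sub_cancel_left]
  refine ⟨by linarith, ?_, sub_le_self _ (div_nonneg hD0 hden.le), ?_⟩
  · rw [← hD]
    constructor <;> intro <;> linarith
  · rw [sub_eq_self, div_eq_zero_iff, or_iff_left hden.ne', hD]
end

section
/- For a vector space X in M_d(C)⊗M_d(C) that is LDOI parametrized by (A,B,C), and unit vectors v, w ∈ C^d, the product expectation value satisfies ⟨v⊗w| X |v⊗w⟩ = ⟨v⊙conj(v)| A |w⊙conj(w)⟩ + ⟨v⊙w| (B − diag B) |v⊙w⟩ + ⟨v⊙conj(w)| (C − diag C) |v⊙conj(w)⟩, where ⊙ is the entrywise product of vectors. -/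
open Matrix

/-!
Expanding `⟨v⊗w|X|v⊗w⟩` entrywise, each of the three families of matrix units in `X` pairs
with the product vector in its own pattern: `|ij⟩⟨ij|` picks up `|v_i|² A_ij |w_j|²`,
`|ii⟩⟨jj|` picks up `conj(v_i w_i) B_ij v_j w_j`, and `|ij⟩⟨ji|` picks up
`conj(v_i w_j) C_ij v_j w_i = conj(v_i conj w_i) C_ij (v_j conj w_j)`. The diagonal entries
are counted once, through `A`, which is why `B` and `C` appear with their diagonals removed.
-/

section

variable {R : Type*} [CommRing R] {d : ℕ}

def offDiag (M : Matrix (Fin d) (Fin d) R) : Matrix (Fin d) (Fin d) R :=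
  M - diagonal fun k => M k k

lemma offDiag_apply (M : Matrix (Fin d) (Fin d) R) (i j : Fin d) :
    offDiag M i j = if i = j then 0 else M i j := by
  rcases eq_or_ne i j with rfl | hij
  · simp [offDiag]
  · simp [offDiag, hij]

lemma X3_eq_add (A B C : Matrix (Fin d) (Fin d) R) :
    X3 A B C = X3 A 0 0 + X3 0 B 0 + X3 0 0 C := by
  ext p q
  simp [X3]

variable [StarRing R] {ι : Type*} [Fintype ι]

/-- The sesquilinear form `⟨x|M|y⟩ = conj(x)ᵀ M y`. -/
def braket (x : ι → R) (M : Matrix ι ι R) (y : ι → R) : R :=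
  ∑ i, ∑ j, star (x i) * M i j * y j

lemma braket_add (x y : ι → R) (M N : Matrix ι ι R) :
    braket x (M + N) y = braket x M y + braket x N y := by
  simp only [braket, Matrix.add_apply, mul_add, add_mul, Finset.sum_add_distrib]

lemma braket_X3_A (x y : Fin d × Fin d → R) (A : Matrix (Fin d) (Fin d) R) :
    braket x (X3 A 0 0) y = ∑ i, ∑ j, star (x (i, j)) * A i j * y (i, j) := by
  simp [braket, X3, Fintype.sum_prod_type, ite_and]

lemma braket_X3_B (x y : Fin d × Fin d → R) (B : Matrix (Fin d) (Fin d) R) :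
    braket x (X3 0 B 0) y = braket (fun i => x (i, i)) (offDiag B) (fun j => y (j, j)) := by
  simp [braket, X3, offDiag_apply, Fintype.sum_prod_type, ite_and]

lemma braket_X3_C (x y : Fin d × Fin d → R) (C : Matrix (Fin d) (Fin d) R) :
    braket x (X3 0 0 C) y = ∑ i, ∑ j, star (x (i, j)) * offDiag C i j * y (j, i) := by
  simp [braket, X3, offDiag_apply, Fintype.sum_prod_type, ite_and]

theorem braket_X3_tmul (A B C : Matrix (Fin d) (Fin d) R) (v w : Fin d → R) :
    braket (fun p => v p.1 * w p.2) (X3 A B C) (fun p => v p.1 * w p.2) =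
      braket (v * star v) A (w * star w) + braket (v * w) (offDiag B) (v * w) +
        braket (v * star w) (offDiag C) (v * star w) := by
  rw [X3_eq_add, braket_add, braket_add, braket_X3_A, braket_X3_B, braket_X3_C]
  simp only [braket, Pi.mul_apply, Pi.star_apply, star_mul', star_star]
  congr 1
  · congr 1
    exact Fintype.sum_congr _ _ fun i => Fintype.sum_congr _ _ fun j => by ring
  · exact Fintype.sum_congr _ _ fun i => Fintype.sum_congr _ _ fun j => by ring

end

theorem stmt_19_general {d : ℕ} (A B C : Matrix (Fin d) (Fin d) ℂ)
    (v w : Fin d → ℂ) :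
    ∑ p : Fin d × Fin d, ∑ q : Fin d × Fin d,
        starRingEnd ℂ (v p.1 * w p.2) * X3 A B C p q * (v q.1 * w q.2) =
      (∑ i, ∑ j, starRingEnd ℂ (v i * starRingEnd ℂ (v i)) * A i j *
          (w j * starRingEnd ℂ (w j))) +
      (∑ i, ∑ j, starRingEnd ℂ (v i * w i) *
          (B - Matrix.diagonal fun k => B k k) i j * (v j * w j)) +
      (∑ i, ∑ j, starRingEnd ℂ (v i * starRingEnd ℂ (w i)) *
          (C - Matrix.diagonal fun k => C k k) i j * (v j * starRingEnd ℂ (w j))) :=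
  braket_X3_tmul A B C v w

/-- product expectation values (local numerical range) of LDOI matrices. -/
theorem stmt_19 {d : ℕ} (A B C : Matrix (Fin d) (Fin d) ℂ) (h : EqDiag A B C)
    (v w : Fin d → ℂ)
    (hv : ∑ i, ‖v i‖ ^ 2 = 1) (hw : ∑ i, ‖w i‖ ^ 2 = 1) :
    ∑ p : Fin d × Fin d, ∑ q : Fin d × Fin d,
        starRingEnd ℂ (v p.1 * w p.2) * X3 A B C p q * (v q.1 * w q.2) =
      (∑ i, ∑ j, starRingEnd ℂ (v i * starRingEnd ℂ (v i)) * A i j *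
          (w j * starRingEnd ℂ (w j))) +
      (∑ i, ∑ j, starRingEnd ℂ (v i * w i) *
          (B - Matrix.diagonal fun k => B k k) i j * (v j * w j)) +
      (∑ i, ∑ j, starRingEnd ℂ (v i * starRingEnd ℂ (w i)) *
          (C - Matrix.diagonal fun k => C k k) i j * (v j * starRingEnd ℂ (w j))) :=
  stmt_19_general A B C v w
end
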